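/- arXiv:1304.5648 — 2 statements merged into one kernel-verified Lean document; each statement's English description precedes it below -/
import Mathlib

section
/- Let G be a finite group and M a Mackey functor over G. The unique map of Tambara functors A → T(M) (where A is the Burnside Mackey functor, the initial Tambara functor) induces an isomorphism A ≅ T^0(M), and the universal map θ_M : M → T(M) induces an isomorphism of Mackey functors M ≅ T^1(M), where T(M) = ⊕_{n∈ℕ} T^n(M). -/
set_option autoImplicit false

namespace Tamb

variable {G : Type} [Group G]

/-- A function between `G`-sets is equivariant. -/
def IsEquivariant (G : Type) [Group G] {A B : Type} [SMul G A] [SMul G B] (f : A → B) : Prop :=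
  ∀ (g : G) (a : A), f (g • a) = g • f a

section Maps

variable {X Y Z : Type} [MulAction G X] [MulAction G Y] [MulAction G Z]

/-- The identity equivariant map. -/
def gid (G X : Type) [Group G] [MulAction G X] : X →[G] X :=
  ⟨fun x => x, fun _ _ => rfl⟩

@[simp] theorem gid_apply (x : X) : gid G X x = x := rfl

/-- Composition of equivariant maps. -/
def gcomp (j : Y →[G] Z) (i : X →[G] Y) : X →[G] Z :=
  ⟨fun x => j (i x), fun g x => by
    show j (i (g • x)) = g • j (i x)
    rw [MulActionHom.map_smul, MulActionHom.map_smul]⟩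

@[simp] theorem gcomp_apply (j : Y →[G] Z) (i : X →[G] Y) (x : X) : gcomp j i x = j (i x) := rfl

/-- The pullback of two equivariant maps of `G`-sets. -/
def Pb (f : X →[G] Z) (g : Y →[G] Z) : Type := {p : X × Y // f p.1 = g p.2}

namespace Pb

variable (f : X →[G] Z) (g : Y →[G] Z)

instance : SMul G (Pb f g) :=
  ⟨fun a p => ⟨(a • p.1.1, a • p.1.2), by
    rw [MulActionHom.map_smul, MulActionHom.map_smul, p.2]⟩⟩

instance : MulAction G (Pb f g) where
  one_smul p := Subtype.ext (Prod.ext (one_smul _ _) (one_smul _ _))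
  mul_smul a b p := Subtype.ext (Prod.ext (mul_smul _ _ _) (mul_smul _ _ _))

instance [Finite X] [Finite Y] : Finite (Pb f g) := Subtype.finite

/-- First projection of a pullback. -/
def fstHom : Pb f g →[G] X := ⟨fun p => p.1.1, fun _ _ => rfl⟩
/-- Second projection of a pullback. -/
def sndHom : Pb f g →[G] Y := ⟨fun p => p.1.2, fun _ _ => rfl⟩

@[simp] theorem fstHom_apply (p : Pb f g) : fstHom f g p = p.1.1 := rfl
@[simp] theorem sndHom_apply (p : Pb f g) : sndHom f g p = p.1.2 := rfl

end Pb

/-- `Sec i j` is the set `∏_{i,j} X` of sections of `i : X → Y` defined on fibers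
of `j : Y → Z`: an element is a point `z : Z` together with a section of `i`
defined on `j⁻¹(z)`. -/
structure Sec (i : X →[G] Y) (j : Y →[G] Z) where
  pt : Z
  sec : ∀ y : Y, j y = pt → X
  isSec : ∀ (y : Y) (h : j y = pt), i (sec y h) = y

namespace Sec

variable {i : X →[G] Y} {j : Y →[G] Z}

theorem ext' {σ τ : Sec i j} (h1 : σ.pt = τ.pt)
    (h2 : ∀ (y : Y) (h : j y = σ.pt) (h' : j y = τ.pt), σ.sec y h = τ.sec y h') : σ = τ := by
  obtain ⟨p, s, hs⟩ := σ
  obtain ⟨p', s', hs'⟩ := τ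
  dsimp at h1
  subst h1
  have hss : s = s' := by
    funext y hy
    exact h2 y hy hy
  subst hss
  rfl

theorem sec_congr (σ : Sec i j) {y y' : Y} (e : y = y') {h : j y = σ.pt} {h' : j y' = σ.pt} :
    σ.sec y h = σ.sec y' h' := by subst e; rfl

instance : SMul G (Sec i j) :=
  ⟨fun a σ =>
    { pt := a • σ.pt
      sec := fun y h => a • σ.sec (a⁻¹ • y) (by rw [MulActionHom.map_smul, h, inv_smul_smul])
      isSec := fun y h => by
        rw [MulActionHom.map_smul, σ.isSec, smul_inv_smul] }⟩

@[simp] theorem smul_pt (a : G) (σ : Sec i j) : (a • σ).pt = a • σ.pt := rfl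

theorem smul_sec (a : G) (σ : Sec i j) (y : Y) (h : j y = (a • σ).pt)
    (h' : j (a⁻¹ • y) = σ.pt) : (a • σ).sec y h = a • σ.sec (a⁻¹ • y) h' := rfl

instance : MulAction G (Sec i j) where
  one_smul σ := by
    refine ext' (one_smul _ _) (fun y h h' => ?_)
    have h'' : j ((1 : G)⁻¹ • y) = σ.pt := by rw [inv_one, one_smul]; exact h'
    rw [smul_sec 1 σ y h h'', one_smul]
    exact sec_congr σ (by rw [inv_one, one_smul])
  mul_smul a b σ := by
    refine ext' (mul_smul _ _ _) (fun y h h' => ?_)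
    have h1 : j ((a * b)⁻¹ • y) = σ.pt := by
      rw [MulActionHom.map_smul, h]
      exact inv_smul_smul _ _
    have h2 : j (a⁻¹ • y) = (b • σ).pt := by
      rw [MulActionHom.map_smul, h']
      show a⁻¹ • (a • (b • σ).pt) = _
      exact inv_smul_smul _ _
    have h3 : j (b⁻¹ • (a⁻¹ • y)) = σ.pt := by
      rw [MulActionHom.map_smul, h2]
      exact inv_smul_smul _ _
    rw [smul_sec (a * b) σ y h h1, smul_sec a (b • σ) y h' h2, smul_sec b σ (a⁻¹ • y) h2 h3,
      mul_smul]
    exact congrArg (a • ·) (congrArg (b • ·) (sec_congr σ (by rw [mul_inv_rev, mul_smul])))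

instance optionFinite {X : Type} [Finite X] : Finite (Option X) :=
  Finite.of_equiv (X ⊕ PUnit.{1}) (Equiv.optionEquivSumPUnit.{0,0} X).symm

instance [Finite X] [Finite Y] [Finite Z] : Finite (Sec i j) := by
  classical
  have hF : Function.Injective (fun σ : Sec i j =>
      ((σ.pt, fun y => if h : j y = σ.pt then some (σ.sec y h) else none) :
        Z × (Y → Option X))) := by
    intro σ τ he
    have h1 : σ.pt = τ.pt := congrArg Prod.fst he
    refine ext' h1 (fun y hy hy' => ?_)
    have h2 := congrFun (congrArg Prod.snd he) y
    dsimp only at h2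
    rw [dif_pos hy, dif_pos hy'] at h2
    exact Option.some_injective _ h2
  exact Finite.of_injective _ hF

end Sec

/-- The canonical projection `∏_{i,j} X → Z`. -/
def pHom (i : X →[G] Y) (j : Y →[G] Z) : Sec i j →[G] Z :=
  ⟨fun σ => σ.pt, fun _ _ => rfl⟩

@[simp] theorem pHom_apply (i : X →[G] Y) (j : Y →[G] Z) (σ : Sec i j) :
    pHom i j σ = σ.pt := rfl

/-- The canonical pullback `Y ×_Z ∏_{i,j} X`. -/
abbrev ECan (i : X →[G] Y) (j : Y →[G] Z) : Type := Pb j (pHom i j)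

/-- The evaluation map `e : Y ×_Z ∏_{i,j} X → X`. -/
def eval (i : X →[G] Y) (j : Y →[G] Z) : ECan i j → X := fun q => q.1.2.sec q.1.1 q.2

theorem eval_smul (i : X →[G] Y) (j : Y →[G] Z) (a : G) (q : ECan i j) :
    eval i j (a • q) = a • eval i j q := by
  have h1 : j (a • q.1.1) = (a • q.1.2).pt := by
    rw [MulActionHom.map_smul, q.2]; rfl
  have h2 : j (a⁻¹ • (a • q.1.1)) = q.1.2.pt := by rw [inv_smul_smul]; exact q.2
  calc eval i j (a • q) = (a • q.1.2).sec (a • q.1.1) h1 := rfl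
    _ = a • q.1.2.sec (a⁻¹ • (a • q.1.1)) h2 := Sec.smul_sec _ _ _ _ _
    _ = a • q.1.2.sec q.1.1 q.2 := congrArg (a • ·) (Sec.sec_congr _ (inv_smul_smul a q.1.1))

/-- The evaluation map as an equivariant map. -/
def evalHom (i : X →[G] Y) (j : Y →[G] Z) : ECan i j →[G] X :=
  ⟨eval i j, eval_smul i j⟩

/-- The projection `π₂ : Y ×_Z ∏_{i,j} X → ∏_{i,j} X` of the canonical exponential diagram. -/
def pi2Hom (i : X →[G] Y) (j : Y →[G] Z) : ECan i j →[G] Sec i j :=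
  Pb.sndHom j (pHom i j)

end Maps

/-- `(f, g, h)` is a distributor for `(i, j)`: the diagram with bottom row
`X →i Y →j Z`, top row `g : A → B`, left vertical `f : A → X` and right vertical
`h : B → Z` is an exponential diagram, i.e. it is isomorphic (by equivariant
bijections fixing the bottom row) to the canonical diagram built from `∏_{i,j} X`. -/
def IsDistributor {X Y Z A B : Type} [MulAction G X] [MulAction G Y] [MulAction G Z]
    [MulAction G A] [MulAction G B]
    (i : X →[G] Y) (j : Y →[G] Z) (f : A →[G] X) (g : A →[G] B) (h : B →[G] Z) : Prop :=
  ∃ (α : A ≃ ECan i j) (β : B ≃ Sec i j),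
    IsEquivariant G ⇑α ∧ IsEquivariant G ⇑β ∧
    (∀ a, eval i j (α a) = f a) ∧
    (∀ a, β (g a) = (α a).1.2) ∧
    (∀ b, (β b).pt = h b)
section CoreB

/-- A (bundled) finite `G`-set. -/
structure FinGSet (G : Type) [Group G] : Type 1 where
  carrier : Type
  [fin : Finite carrier]
  [act : MulAction G carrier]

attribute [instance] FinGSet.fin FinGSet.act

instance : MulAction G Empty where
  smul _ e := e.elim
  one_smul e := e.elim
  mul_smul _ _ e := e.elim

/-- Bundle a finite `G`-set. -/
def mkG (G : Type) [Group G] (A : Type) [MulAction G A] [Finite A] : FinGSet G := ⟨A⟩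

/-- The empty `G`-set. -/
def emptyG (G : Type) [Group G] : FinGSet G := ⟨Empty⟩
/-- The one-point `G`-set (`G/G`). -/
def ptG (G : Type) [Group G] : FinGSet G := ⟨PUnit⟩
/-- Binary coproduct of finite `G`-sets. -/
def sumG (X Y : FinGSet G) : FinGSet G := ⟨X.carrier ⊕ Y.carrier⟩
/-- Binary product of finite `G`-sets. -/
def prodG (X Y : FinGSet G) : FinGSet G := ⟨X.carrier × Y.carrier⟩

def initHom (X : FinGSet G) : (emptyG G).carrier →[G] X.carrier :=
  ⟨fun e => e.elim, fun _ e => e.elim⟩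
def toPtHom (X : FinGSet G) : X.carrier →[G] (ptG G).carrier :=
  ⟨fun _ => PUnit.unit, fun _ _ => rfl⟩
def inlHom (X Y : FinGSet G) : X.carrier →[G] (sumG X Y).carrier :=
  ⟨Sum.inl, fun _ _ => rfl⟩
def inrHom (X Y : FinGSet G) : Y.carrier →[G] (sumG X Y).carrier :=
  ⟨Sum.inr, fun _ _ => rfl⟩
def sumMapHom {X Y X' Y' : FinGSet G} (f : X.carrier →[G] X'.carrier)
    (g : Y.carrier →[G] Y'.carrier) : (sumG X Y).carrier →[G] (sumG X' Y').carrier :=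
  ⟨Sum.map f g, fun a x => by
    cases x with
    | inl v => show Sum.inl (f (a • v)) = Sum.inl (a • f v); rw [MulActionHom.map_smul]
    | inr v => show Sum.inr (g (a • v)) = Sum.inr (a • g v); rw [MulActionHom.map_smul]⟩
def sumElimHom {X Y Z : FinGSet G} (f : X.carrier →[G] Z.carrier)
    (g : Y.carrier →[G] Z.carrier) : (sumG X Y).carrier →[G] Z.carrier :=
  ⟨Sum.elim f g, fun a x => by
    cases x with
    | inl v => show f (a • v) = a • f v; rw [MulActionHom.map_smul]
    | inr v => show g (a • v) = a • g v; rw [MulActionHom.map_smul]⟩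
/-- The fold map `X ⊔ X → X`. -/
def foldHom (X : FinGSet G) : (sumG X X).carrier →[G] X.carrier :=
  sumElimHom (gid G X.carrier) (gid G X.carrier)
def prodMapHom {X Y X' Y' : FinGSet G} (f : X.carrier →[G] X'.carrier)
    (g : Y.carrier →[G] Y'.carrier) : (prodG X Y).carrier →[G] (prodG X' Y').carrier :=
  ⟨Prod.map f g, fun a x => Prod.ext (MulActionHom.map_smul f a x.1) (MulActionHom.map_smul g a x.2)⟩
def pi1Hom (X Y : FinGSet G) : (prodG X Y).carrier →[G] X.carrier :=
  ⟨Prod.fst, fun _ _ => rfl⟩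
def pi2ProdHom (X Y : FinGSet G) : (prodG X Y).carrier →[G] Y.carrier :=
  ⟨Prod.snd, fun _ _ => rfl⟩

/-- A semi-Mackey functor over `G` (with set values): restrictions and transfers,
functorial, converting coproducts into products, and satisfying the pullback
(Mackey double coset) condition. -/
structure SemiMackey (G : Type) [Group G] : Type 2 where
  obj : FinGSet G → Type 1
  nonempty : ∀ X, Nonempty (obj X)
  res : ∀ {X Y : FinGSet G}, (X.carrier →[G] Y.carrier) → obj Y → obj X
  tr : ∀ {X Y : FinGSet G}, (X.carrier →[G] Y.carrier) → obj X → obj Y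
  res_id : ∀ {X : FinGSet G} (x : obj X), res (gid G X.carrier) x = x
  res_comp : ∀ {X Y Z : FinGSet G} (i : X.carrier →[G] Y.carrier)
    (j : Y.carrier →[G] Z.carrier) (z : obj Z), res i (res j z) = res (gcomp j i) z
  tr_id : ∀ {X : FinGSet G} (x : obj X), tr (gid G X.carrier) x = x
  tr_comp : ∀ {X Y Z : FinGSet G} (i : X.carrier →[G] Y.carrier)
    (j : Y.carrier →[G] Z.carrier) (x : obj X), tr j (tr i x) = tr (gcomp j i) x
  mackey : ∀ {X Y Z : FinGSet G} (j : X.carrier →[G] Z.carrier)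
    (i : Y.carrier →[G] Z.carrier) (y : obj Y),
    res j (tr i y) =
      tr (X := mkG G (Pb j i)) (Pb.fstHom j i) (res (X := mkG G (Pb j i)) (Pb.sndHom j i) y)
  sum_bij : ∀ (X Y : FinGSet G),
    Function.Bijective (fun z : obj (sumG X Y) => (res (inlHom X Y) z, res (inrHom X Y) z))
  empty_subsingleton : Subsingleton (obj (emptyG G))

/-- A semi-Tambara functor over `G`: a semi-Mackey functor with multiplicative
norms, commuting with restrictions over pullbacks and satisfying the
distributive law over exponential diagrams. -/
structure SemiTambara (G : Type) [Group G] extends SemiMackey G : Type 2 where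
  nm : ∀ {X Y : FinGSet G}, (X.carrier →[G] Y.carrier) → obj X → obj Y
  nm_id : ∀ {X : FinGSet G} (x : obj X), nm (gid G X.carrier) x = x
  nm_comp : ∀ {X Y Z : FinGSet G} (i : X.carrier →[G] Y.carrier)
    (j : Y.carrier →[G] Z.carrier) (x : obj X), nm j (nm i x) = nm (gcomp j i) x
  nm_res : ∀ {X Y Z : FinGSet G} (j : X.carrier →[G] Z.carrier)
    (i : Y.carrier →[G] Z.carrier) (y : obj Y),
    res j (nm i y) =
      nm (X := mkG G (Pb j i)) (Pb.fstHom j i) (res (X := mkG G (Pb j i)) (Pb.sndHom j i) y)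
  distrib : ∀ {X Y Z A B : FinGSet G} (i : X.carrier →[G] Y.carrier)
    (j : Y.carrier →[G] Z.carrier) (f : A.carrier →[G] X.carrier)
    (g : A.carrier →[G] B.carrier) (h : B.carrier →[G] Z.carrier),
    IsDistributor i j f g h → ∀ x : obj X, nm j (tr i x) = tr h (nm g (res f x))

/-- The element of `M(X ⊔ Y)` corresponding to a pair `(x, y)`. -/
noncomputable def SemiMackey.pairElt (M : SemiMackey G) {X Y : FinGSet G}
    (x : M.obj X) (y : M.obj Y) : M.obj (sumG X Y) :=
  (Equiv.ofBijective _ (M.sum_bij X Y)).symm (x, y)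

/-- The addition on `M(X)` induced by transfer along the fold map. -/
noncomputable def SemiMackey.add (M : SemiMackey G) {X : FinGSet G} (x y : M.obj X) : M.obj X :=
  M.tr (foldHom X) (M.pairElt x y)

/-- The zero of `M(X)`: the transfer of the unique element of `M(∅)`. -/
noncomputable def SemiMackey.zero (M : SemiMackey G) (X : FinGSet G) : M.obj X :=
  M.tr (initHom X) (M.nonempty (emptyG G)).some

/-- The multiplication on `R(X)` induced by the norm along the fold map. -/
noncomputable def SemiTambara.mul (R : SemiTambara G) {X : FinGSet G} (x y : R.obj X) :
    R.obj X :=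
  R.nm (foldHom X) (R.toSemiMackey.pairElt x y)

/-- The multiplicative unit of `R(X)`: the norm of the unique element of `R(∅)`. -/
noncomputable def SemiTambara.one (R : SemiTambara G) (X : FinGSet G) : R.obj X :=
  R.nm (initHom X) (R.nonempty (emptyG G)).some

/-- A Mackey functor: a semi-Mackey functor all of whose values are abelian
groups under the transfer-induced addition. -/
structure Mackey (G : Type) [Group G] extends SemiMackey G : Type 2 where
  hasNeg : ∀ (X : FinGSet G) (x : obj X), ∃ y, toSemiMackey.add x y = toSemiMackey.zero X

/-- A Tambara functor: a semi-Tambara functor all of whose values are abelian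
groups under the transfer-induced addition. -/
structure Tambara (G : Type) [Group G] extends SemiTambara G : Type 2 where
  hasNeg : ∀ (X : FinGSet G) (x : obj X),
    ∃ y, toSemiMackey.add x y = toSemiMackey.zero X

/-- A map of semi-Mackey functors. -/
structure SMackHom {G : Type} [Group G] (M N : SemiMackey G) : Type 1 where
  app : ∀ X, M.obj X → N.obj X
  app_res : ∀ {X Y : FinGSet G} (f : X.carrier →[G] Y.carrier) (y : M.obj Y),
    app X (M.res f y) = N.res f (app Y y)
  app_tr : ∀ {X Y : FinGSet G} (f : X.carrier →[G] Y.carrier) (x : M.obj X),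
    app Y (M.tr f x) = N.tr f (app X x)

/-- A map of semi-Tambara functors. -/
structure STambHom {G : Type} [Group G] (M N : SemiTambara G) extends
    SMackHom M.toSemiMackey N.toSemiMackey : Type 1 where
  app_nm : ∀ {X Y : FinGSet G} (f : X.carrier →[G] Y.carrier) (x : M.obj X),
    app Y (M.nm f x) = N.nm f (app X x)

/-- A formal "transfer of a norm of an element of `M`": a pair
`(U →i V →j X, u ∈ M(U))`. -/
structure PreT {G : Type} [Group G] (M : SemiMackey G) (X : FinGSet G) : Type 1 where
  U : FinGSet G
  V : FinGSet G
  i : U.carrier →[G] V.carrier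
  j : V.carrier →[G] X.carrier
  u : M.obj U

/-- Two pairs are isomorphic. -/
def IsoRel (M : SemiMackey G) (X : FinGSet G) (a b : PreT M X) : Prop :=
  ∃ (f : b.U.carrier ≃ a.U.carrier) (g : b.V.carrier ≃ a.V.carrier)
    (hf : IsEquivariant G ⇑f) (_ : IsEquivariant G ⇑g),
    (∀ u' : b.U.carrier, a.i (f u') = g (b.i u')) ∧
    (∀ v' : b.V.carrier, a.j (g v') = b.j v') ∧
    M.res (MulActionHom.mk ⇑f hf) a.u = b.u

/-- The relation defining the free semi-Tambara functor `sT(M)`: pairs are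
identified up to isomorphism and the distributive-law relation. -/
inductive STRel (M : SemiMackey G) (X : FinGSet G) : PreT M X → PreT M X → Prop
  | iso {a b : PreT M X} : IsoRel M X a b → STRel M X a b
  | distrib {W U V A B : FinGSet G} (k : W.carrier →[G] U.carrier)
      (i : U.carrier →[G] V.carrier) (j : V.carrier →[G] X.carrier)
      (f : A.carrier →[G] W.carrier) (g : A.carrier →[G] B.carrier)
      (h : B.carrier →[G] V.carrier) :
      IsDistributor k i f g h → ∀ w : M.obj W,
      STRel M X ⟨U, V, i, j, M.tr k w⟩ ⟨A, B, g, gcomp j h, M.res f w⟩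

/-- The value of the free semi-Tambara functor on `M` at `X`. -/
def sT (M : SemiMackey G) (X : FinGSet G) : Type 1 := Quot (STRel M X)

/-- The universal map `θ_M : M → sT(M)`, at the level of representatives. -/
def thetaPre (M : SemiMackey G) (X : FinGSet G) (x : M.obj X) : PreT M X :=
  ⟨X, X, gid G X.carrier, gid G X.carrier, x⟩

/-- Transfer on representatives: postcomposition. -/
def trPre (M : SemiMackey G) {X Y : FinGSet G} (f : X.carrier →[G] Y.carrier)
    (a : PreT M X) : PreT M Y :=
  ⟨a.U, a.V, a.i, gcomp f a.j, a.u⟩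

/-- Restriction on representatives: pull back both maps. -/
def resPre (M : SemiMackey G) {X Y : FinGSet G} (f : Y.carrier →[G] X.carrier)
    (a : PreT M X) : PreT M Y where
  U := mkG G (Pb a.i (Pb.fstHom a.j f))
  V := mkG G (Pb a.j f)
  i := Pb.sndHom a.i (Pb.fstHom a.j f)
  j := Pb.sndHom a.j f
  u := M.res (X := mkG G (Pb a.i (Pb.fstHom a.j f))) (Pb.fstHom a.i (Pb.fstHom a.j f)) a.u

/-- Norm on representatives, via the canonical exponential diagram for `(j, f)`. -/
def normPre (M : SemiMackey G) {X Y : FinGSet G} (f : X.carrier →[G] Y.carrier)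
    (a : PreT M X) : PreT M Y where
  U := mkG G (Pb a.i (evalHom a.j f))
  V := mkG G (Sec a.j f)
  i := gcomp (pi2Hom a.j f) (Pb.sndHom a.i (evalHom a.j f))
  j := pHom a.j f
  u := M.res (X := mkG G (Pb a.i (evalHom a.j f))) (Pb.fstHom a.i (evalHom a.j f)) a.u

/-- Addition on representatives: disjoint union. -/
noncomputable def addPre (M : SemiMackey G) {X : FinGSet G} (a b : PreT M X) : PreT M X where
  U := sumG a.U b.U
  V := sumG a.V b.V
  i := sumMapHom a.i b.i
  j := sumElimHom a.j b.j
  u := M.pairElt a.u b.u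

/-- A pair has (pure) degree `n` if every fiber of its first map has exactly `n`
elements. -/
def DegN {M : SemiMackey G} {X : FinGSet G} (n : ℕ) (a : PreT M X) : Prop :=
  ∀ v : a.V.carrier, Nat.card {u : a.U.carrier // a.i u = v} = n

/-- A finite `G`-set over `X` (a representative for the Burnside semi-Mackey functor). -/
structure BurnPre (G : Type) [Group G] (X : FinGSet G) : Type 1 where
  A : FinGSet G
  f : A.carrier →[G] X.carrier

/-- Isomorphism of finite `G`-sets over `X`. -/
def BurnIso {X : FinGSet G} (s t : BurnPre G X) : Prop :=
  ∃ (e : s.A.carrier ≃ t.A.carrier) (_ : IsEquivariant G ⇑e), ∀ x, t.f (e x) = s.f x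

/-- The pair `(∅ → A →f X, 0)` associated to a `G`-set over `X`. -/
noncomputable def bPair (M : SemiMackey G) {X : FinGSet G} (s : BurnPre G X) : PreT M X :=
  ⟨emptyG G, s.A, initHom s.A, s.f, (M.nonempty (emptyG G)).some⟩

end CoreB

/-!
Two invariants of a pair `(U →i V →j X, u)` are additive and respect the relations defining
`sT(M)`: the `G`-set over `X` of points of `V` with empty `i`-fibre, and the transfer to `X` of
the restriction of `u` to the points of `U` alone in their fibre. A pair of degree `0` is
equivalent to `(∅ → V → X)`, which the first invariant sends back to `V → X`; together with
cancellation in the Burnside semiring (an isomorphism `A ⊔ K ≅ B ⊔ K` over `X` is traced along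
`K`) this identifies `T⁰(M)` with `A`. A pair of degree `1` is equivalent to `θ_M` of an element
of `M(X)`, and the second invariant is a left inverse of `θ_M`; since `M(X)` is a group, this
makes `θ_M` a bijection onto `T¹(M)`.
-/

section EquivariantEquiv

variable {X Y : Type} [MulAction G X] [MulAction G Y]

theorem IsEquivariant.symm {e : X ≃ Y} (he : IsEquivariant G ⇑e) : IsEquivariant G ⇑e.symm :=
  fun a y => e.injective (by rw [e.apply_symm_apply, he, e.apply_symm_apply])

def equivHom (e : X ≃ Y) (he : IsEquivariant G ⇑e) : X →[G] Y := ⟨e, he⟩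

end EquivariantEquiv

/-- `Pb f g` as a subset of `X × Y`, so that pullbacks cut out by equivalent equations can be
identified. -/
def pbSubMulAction {X Y Z : Type} [MulAction G X] [MulAction G Y] [MulAction G Z]
    (f : X →[G] Z) (g : Y →[G] Z) : SubMulAction G (X × Y) where
  carrier := {p | f p.1 = g p.2}
  smul_mem' a p (hp : f p.1 = g p.2) :=
    show f (a • p.1) = g (a • p.2) by rw [map_smul, map_smul, hp]

namespace SemiMackey

variable (N : SemiMackey G)

theorem tr_res_pb_congr {X Y Z Z' : FinGSet G} (f : X.carrier →[G] Z.carrier)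
    (g : Y.carrier →[G] Z.carrier) (f' : X.carrier →[G] Z'.carrier)
    (g' : Y.carrier →[G] Z'.carrier) (hfg : ∀ x y, f x = g y ↔ f' x = g' y) (y : N.obj Y) :
    N.tr (X := mkG G (Pb f g)) (Pb.fstHom f g) (N.res (X := mkG G (Pb f g)) (Pb.sndHom f g) y) =
      N.tr (X := mkG G (Pb f' g')) (Pb.fstHom f' g')
        (N.res (X := mkG G (Pb f' g')) (Pb.sndHom f' g') y) := by
  suffices h : ∀ S S' : SubMulAction G (X.carrier × Y.carrier), S = S' →
      N.tr (X := mkG G S) ⟨fun p => p.1.1, fun _ _ => rfl⟩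
          (N.res (X := mkG G S) ⟨fun p => p.1.2, fun _ _ => rfl⟩ y) =
        N.tr (X := mkG G S') ⟨fun p => p.1.1, fun _ _ => rfl⟩
          (N.res (X := mkG G S') ⟨fun p => p.1.2, fun _ _ => rfl⟩ y) from
    h (pbSubMulAction f g) (pbSubMulAction f' g') (SetLike.ext fun p => hfg p.1 p.2)
  rintro S _ rfl
  rfl

theorem tr_equivHom {P Q : FinGSet G} (e : P.carrier ≃ Q.carrier) (he : IsEquivariant G ⇑e)
    (y : N.obj P) : N.tr (equivHom e he) y = N.res (equivHom e.symm he.symm) y := by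
  have h₁ := N.mackey (gid G Q.carrier) (equivHom e he) y
  have h₂ := N.mackey (equivHom e.symm he.symm) (gid G P.carrier) y
  rw [N.res_id] at h₁
  rw [N.tr_id] at h₂
  rw [h₁, h₂]
  exact N.tr_res_pb_congr _ _ _ _ (fun _ _ => e.symm_apply_eq.symm) y

theorem tr_res_eq_of_equiv {P Q W R : FinGSet G} (e : P.carrier ≃ Q.carrier)
    (he : IsEquivariant G ⇑e) {fP : P.carrier →[G] R.carrier} {gP : P.carrier →[G] W.carrier}
    {fQ : Q.carrier →[G] R.carrier} {gQ : Q.carrier →[G] W.carrier}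
    (hf : ∀ p, fQ (e p) = fP p) (hg : ∀ p, gQ (e p) = gP p) (w : N.obj W) :
    N.tr fP (N.res gP w) = N.tr fQ (N.res gQ w) := by
  have hfP : fP = gcomp fQ (equivHom e he) := MulActionHom.ext fun p => (hf p).symm
  have hgP : gP = gcomp gQ (equivHom e he) := MulActionHom.ext fun p => (hg p).symm
  have hee : gcomp (equivHom e he) (equivHom e.symm he.symm) = gid G Q.carrier :=
    MulActionHom.ext e.apply_symm_apply
  rw [hfP, hgP, ← N.tr_comp, ← N.res_comp, tr_equivHom, N.res_comp, hee, N.res_id]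


theorem res_inl_pairElt {X Y : FinGSet G} (x : N.obj X) (y : N.obj Y) :
    N.res (inlHom X Y) (N.pairElt x y) = x :=
  congrArg Prod.fst ((Equiv.ofBijective _ (N.sum_bij X Y)).apply_symm_apply (x, y))

theorem res_inr_pairElt {X Y : FinGSet G} (x : N.obj X) (y : N.obj Y) :
    N.res (inrHom X Y) (N.pairElt x y) = y :=
  congrArg Prod.snd ((Equiv.ofBijective _ (N.sum_bij X Y)).apply_symm_apply (x, y))

theorem pairElt_ext {X Y : FinGSet G} {z z' : N.obj (sumG X Y)}
    (hl : N.res (inlHom X Y) z = N.res (inlHom X Y) z')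
    (hr : N.res (inrHom X Y) z = N.res (inrHom X Y) z') : z = z' :=
  (N.sum_bij X Y).injective (Prod.ext hl hr)

theorem res_sumMap_pairElt {X Y X' Y' : FinGSet G} (f : X.carrier →[G] X'.carrier)
    (g : Y.carrier →[G] Y'.carrier) (x : N.obj X') (y : N.obj Y') :
    N.res (sumMapHom f g) (N.pairElt x y) = N.pairElt (N.res f x) (N.res g y) := by
  refine N.pairElt_ext ?_ ?_
  · rw [res_inl_pairElt, N.res_comp]
    change N.res (gcomp (inlHom X' Y') f) _ = _
    rw [← N.res_comp, res_inl_pairElt]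
  · rw [res_inr_pairElt, N.res_comp]
    change N.res (gcomp (inrHom X' Y') g) _ = _
    rw [← N.res_comp, res_inr_pairElt]

theorem res_tr_of_bijective {X Y Z P : FinGSet G} (j : X.carrier →[G] Z.carrier)
    (i : Y.carrier →[G] Z.carrier) (p₁ : P.carrier →[G] X.carrier) (p₂ : P.carrier →[G] Y.carrier)
    (hcomm : ∀ p, j (p₁ p) = i (p₂ p))
    (hbij : Function.Bijective fun p => (⟨(p₁ p, p₂ p), hcomm p⟩ : Pb j i)) (y : N.obj Y) :
    N.res j (N.tr i y) = N.tr p₁ (N.res p₂ y) := by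
  rw [N.mackey j i y]
  refine (N.tr_res_eq_of_equiv (Q := mkG G (Pb j i)) (Equiv.ofBijective _ hbij)
    (fun a p => Subtype.ext (Prod.ext (map_smul p₁ a p) (map_smul p₂ a p)))
    (fun _ => rfl) (fun _ => rfl) y).symm

theorem tr_sumMap_pairElt {X Y X' Y' : FinGSet G} (f : X.carrier →[G] X'.carrier)
    (g : Y.carrier →[G] Y'.carrier) (x : N.obj X) (y : N.obj Y) :
    N.tr (sumMapHom f g) (N.pairElt x y) = N.pairElt (N.tr f x) (N.tr g y) := by
  refine N.pairElt_ext ?_ ?_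
  · rw [res_inl_pairElt, N.res_tr_of_bijective _ _ f (inlHom X Y) (fun _ => rfl), res_inl_pairElt]
    refine ⟨fun v w h => Sum.inl_injective (congrArg (fun p => p.1.2) h), ?_⟩
    rintro ⟨⟨x', v | v⟩, h⟩
    · exact ⟨v, Subtype.ext (Prod.ext (Sum.inl_injective h).symm rfl)⟩
    · exact nomatch (h : Sum.inl x' = Sum.inr (g v))
  · rw [res_inr_pairElt, N.res_tr_of_bijective _ _ g (inrHom X Y) (fun _ => rfl), res_inr_pairElt]
    refine ⟨fun v w h => Sum.inr_injective (congrArg (fun p => p.1.2) h), ?_⟩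
    rintro ⟨⟨y', v | v⟩, h⟩
    · exact nomatch (h : Sum.inr y' = Sum.inl (f v))
    · exact ⟨v, Subtype.ext (Prod.ext (Sum.inr_injective h).symm rfl)⟩

theorem tr_sumElim_pairElt {A B Z : FinGSet G} (f : A.carrier →[G] Z.carrier)
    (g : B.carrier →[G] Z.carrier) (x : N.obj A) (y : N.obj B) :
    N.tr (sumElimHom f g) (N.pairElt x y) = N.add (N.tr f x) (N.tr g y) := by
  have hfold : sumElimHom f g = gcomp (foldHom Z) (sumMapHom f g) :=
    MulActionHom.ext fun v => by cases v <;> rfl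
  rw [hfold, ← N.tr_comp, tr_sumMap_pairElt]
  rfl

theorem add_zero {X : FinGSet G} (x : N.obj X) : N.add x (N.zero X) = x := by
  set o := (N.nonempty (emptyG G)).some
  set e : (sumG X (emptyG G)).carrier ≃ X.carrier := Equiv.sumEmpty X.carrier Empty
  have he : IsEquivariant G ⇑e := by
    rintro a (v | v)
    · rfl
    · exact v.elim
  have hpair : N.pairElt x o = N.res (equivHom e he) x := by
    refine N.pairElt_ext ?_ (@Subsingleton.elim _ N.empty_subsingleton _ _)
    rw [res_inl_pairElt, N.res_comp]
    exact (N.res_id x).symm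
  calc N.add x (N.zero X) = N.tr (sumElimHom (gid G X.carrier) (initHom X)) (N.pairElt x o) := by
        rw [tr_sumElim_pairElt, N.tr_id]; rfl
    _ = N.tr (gid G X.carrier) (N.res (gid G X.carrier) x) := by
        rw [hpair]
        exact N.tr_res_eq_of_equiv e he (by rintro (v | v); exacts [rfl, v.elim]) (fun _ => rfl) x
    _ = x := by rw [N.res_id, N.tr_id]

theorem add_assoc {X : FinGSet G} (x y z : N.obj X) :
    N.add (N.add x y) z = N.add x (N.add y z) := by
  set w := N.pairElt (N.pairElt x y) z
  set e : (sumG X (sumG X X)).carrier ≃ (sumG (sumG X X) X).carrier :=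
    (Equiv.sumAssoc X.carrier X.carrier X.carrier).symm
  have he : IsEquivariant G ⇑e := by rintro a (v | v | v) <;> rfl
  have hpair : N.pairElt x (N.pairElt y z) = N.res (equivHom e he) w := by
    refine N.pairElt_ext ?_ (N.pairElt_ext ?_ ?_) <;>
      simp only [res_inl_pairElt, res_inr_pairElt, N.res_comp]
    · change x = N.res (gcomp (inlHom (sumG X X) X) (inlHom X X)) w
      rw [← N.res_comp, res_inl_pairElt, res_inl_pairElt]
    · change y = N.res (gcomp (inlHom (sumG X X) X) (inrHom X X)) w
      rw [← N.res_comp, res_inl_pairElt, res_inr_pairElt]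
    · change z = N.res (inrHom (sumG X X) X) w
      rw [res_inr_pairElt]
  calc N.add (N.add x y) z
      = N.tr (sumElimHom (foldHom X) (gid G X.carrier)) (N.res (gid G _) w) := by
        rw [N.res_id, tr_sumElim_pairElt, N.tr_id]; rfl
    _ = N.tr (sumElimHom (gid G X.carrier) (foldHom X)) (N.res (equivHom e he) w) :=
        (N.tr_res_eq_of_equiv e he (by rintro (v | v | v) <;> rfl) (fun _ => rfl) w).symm
    _ = N.add x (N.add y z) := by rw [← hpair, tr_sumElim_pairElt, N.tr_id]; rfl

theorem add_right_cancel
    (hneg : ∀ (X : FinGSet G) (x : N.obj X), ∃ y, N.add x y = N.zero X)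
    {X : FinGSet G} {a b k : N.obj X} (h : N.add a k = N.add b k) : a = b := by
  obtain ⟨n, hn⟩ := hneg X k
  calc a = N.add (N.add a k) n := by rw [N.add_assoc, hn, N.add_zero]
    _ = N.add (N.add b k) n := by rw [h]
    _ = b := by rw [N.add_assoc, hn, N.add_zero]

end SemiMackey

section DistributorId

variable {W U : Type} [MulAction G W] [MulAction G U] (k : W →[G] U)

def secIdEquiv : W ≃ Sec k (gid G U) where
  toFun w := ⟨k w, fun _ _ => w, fun _ h => h.symm⟩
  invFun σ := σ.sec σ.pt rfl
  left_inv _ := rfl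
  right_inv σ := Sec.ext' (σ.isSec σ.pt rfl) fun _ _ h' => Sec.sec_congr σ h'.symm

theorem secIdEquiv_equivariant : IsEquivariant G ⇑(secIdEquiv k) := by
  intro a w
  refine Sec.ext' (map_smul k a w) fun y _ h' => ?_
  have h'' : gid G U (a⁻¹ • y) = (secIdEquiv k w).pt := by
    change a⁻¹ • y = k w
    rw [show y = a • k w from h', inv_smul_smul]
  exact (Sec.smul_sec a (secIdEquiv k w) y h' h'').symm

def ecanIdEquiv : W ≃ ECan k (gid G U) where
  toFun w := ⟨(k w, secIdEquiv k w), rfl⟩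
  invFun q := (secIdEquiv k).symm q.1.2
  left_inv _ := rfl
  right_inv q := Subtype.ext <| Prod.ext ((q.1.2.isSec q.1.2.pt rfl).trans q.2.symm)
    ((secIdEquiv k).apply_symm_apply q.1.2)

theorem isDistributor_gid : IsDistributor k (gid G U) (gid G W) (gid G W) k :=
  ⟨ecanIdEquiv k, secIdEquiv k,
    fun a w => Subtype.ext (Prod.ext (map_smul k a w) (secIdEquiv_equivariant k a w)),
    secIdEquiv_equivariant k, fun _ => rfl, fun _ => rfl, fun _ => rfl⟩

end DistributorId

section Relations

variable {M : SemiMackey G} {X : FinGSet G}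

theorem quot_thetaPre_tr {W : FinGSet G} (k : W.carrier →[G] X.carrier) (w : M.obj W) :
    Quot.mk (STRel M X) (thetaPre M X (M.tr k w)) = Quot.mk _ ⟨W, W, gid G W.carrier, k, w⟩ := by
  refine (Quot.sound (STRel.distrib k (gid G X.carrier) (gid G X.carrier) (gid G W.carrier)
    (gid G W.carrier) k (isDistributor_gid k) w)).trans ?_
  rw [M.res_id]
  rfl

theorem quot_thetaPre_add (u v : M.obj X) :
    Quot.mk (STRel M X) (thetaPre M X (M.add u v)) =
      Quot.mk _ (addPre M (thetaPre M X u) (thetaPre M X v)) := by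
  have hid : sumMapHom (gid G X.carrier) (gid G X.carrier) = gid G (sumG X X).carrier :=
    MulActionHom.ext (by rintro (v | v) <;> rfl)
  rw [SemiMackey.add, quot_thetaPre_tr, addPre]
  simp only [thetaPre, hid]
  rfl

theorem degN_one_iff_bijective (a : PreT M X) : DegN 1 a ↔ Function.Bijective a.i := by
  simp only [DegN, Nat.card_eq_one_iff_unique, ← unique_iff_subsingleton_and_nonempty,
    unique_subtype_iff_existsUnique, Function.bijective_iff_existsUnique]

theorem quot_eq_bPair_of_degN_zero (a : PreT M X) (h : DegN 0 a) :
    Quot.mk (STRel M X) a = Quot.mk _ (bPair M ⟨a.V, a.j⟩) := by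
  have : IsEmpty a.U.carrier := ⟨fun u => (Finite.card_eq_zero_iff.1 (h (a.i u))).false ⟨u, rfl⟩⟩
  have : IsEmpty (emptyG G).carrier := inferInstanceAs (IsEmpty Empty)
  exact Quot.sound (STRel.iso ⟨Equiv.equivOfIsEmpty (emptyG G).carrier a.U.carrier, Equiv.refl _,
    fun _ u => u.elim, fun _ _ => rfl, fun u => u.elim, fun _ => rfl,
    @Subsingleton.elim _ M.empty_subsingleton _ _⟩)

theorem exists_quot_eq_thetaPre_of_degN_one (a : PreT M X) (h : DegN 1 a) :
    ∃ x, Quot.mk (STRel M X) a = Quot.mk _ (thetaPre M X x) := by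
  set e := Equiv.ofBijective a.i ((degN_one_iff_bijective a).1 h)
  have he : IsEquivariant G ⇑e.symm := IsEquivariant.symm (map_smul a.i)
  refine ⟨M.tr a.j (M.res (equivHom e.symm he) a.u), ?_⟩
  rw [quot_thetaPre_tr]
  exact Quot.sound (STRel.iso ⟨e.symm, Equiv.refl _, he, fun _ _ => rfl,
    e.apply_symm_apply, fun _ => rfl, rfl⟩)

end Relations

section Trace

variable {A B K : Type*} (e : A ⊕ K ≃ B ⊕ K)

def traceStep : B ⊕ K → B ⊕ K := Sum.elim Sum.inl (e ∘ Sum.inr)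

/-- The path of `inl a` through `K` under `e`; once it reaches `B` it stays there. -/
def tracePath (a : A) (t : ℕ) : B ⊕ K := (traceStep e)^[t] (e (Sum.inl a))

theorem tracePath_succ (a : A) (t : ℕ) :
    tracePath e a (t + 1) = traceStep e (tracePath e a t) :=
  Function.iterate_succ_apply' _ _ _

theorem tracePath_succ_of_eq_inr {a : A} {t : ℕ} {k : K} (h : tracePath e a t = Sum.inr k) :
    tracePath e a (t + 1) = e (Sum.inr k) := by
  rw [tracePath_succ, h]
  rfl

theorem tracePath_add_of_eq_inl {a : A} {t : ℕ} {b : B} (h : tracePath e a t = Sum.inl b)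
    (s : ℕ) : tracePath e a (s + t) = Sum.inl b := by
  induction s with
  | zero => rwa [Nat.zero_add]
  | succ s ih => rw [Nat.succ_add, tracePath_succ, ih]; rfl

/-- Run `e` backwards, using its injectivity at each step. -/
theorem eq_of_tracePath_eq {a a' : A} {s r : ℕ} (h : tracePath e a s = tracePath e a' r)
    (hs : ∀ i < s, (tracePath e a i).isRight) (hr : ∀ i < r, (tracePath e a' i).isRight) :
    a = a' ∧ s = r := by
  induction s generalizing r with
  | zero =>
    cases r with
    | zero => exact ⟨Sum.inl_injective (e.injective h), rfl⟩
    | succ r =>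
      obtain ⟨k', hk'⟩ := Sum.isRight_iff.1 (hr r r.lt_succ_self)
      exact nomatch e.injective (h.trans (tracePath_succ_of_eq_inr e hk'))
  | succ s ih =>
    obtain ⟨k, hk⟩ := Sum.isRight_iff.1 (hs s s.lt_succ_self)
    cases r with
    | zero => exact nomatch e.injective ((tracePath_succ_of_eq_inr e hk).symm.trans h)
    | succ r =>
      obtain ⟨k', hk'⟩ := Sum.isRight_iff.1 (hr r r.lt_succ_self)
      rw [tracePath_succ_of_eq_inr e hk, tracePath_succ_of_eq_inr e hk'] at h
      have hkk' : tracePath e a s = tracePath e a' r := by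
        rw [hk, hk', Sum.inr_injective (e.injective h)]
      obtain ⟨rfl, rfl⟩ := ih hkk' (fun i hi => hs i (by omega)) (fun i hi => hr i (by omega))
      exact ⟨rfl, rfl⟩

variable [Finite K]

theorem exists_tracePath_isLeft (a : A) : ∃ t, (tracePath e a t).isLeft := by
  by_contra! h
  have hright : ∀ t, (tracePath e a t).isRight := fun t => Sum.not_isLeft.1 (h t)
  have hinj : Function.Injective (tracePath e a) := fun s r hsr =>
    (eq_of_tracePath_eq e hsr (fun i _ => hright i) (fun i _ => hright i)).2
  refine Set.infinite_range_of_injective hinj ((Set.finite_range (Sum.inr : K → B ⊕ K)).subset ?_)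
  rintro _ ⟨t, rfl⟩
  obtain ⟨k, hk⟩ := Sum.isRight_iff.1 (hright t)
  exact ⟨k, hk.symm⟩

def exitTime (a : A) : ℕ := Nat.find (exists_tracePath_isLeft e a)

/-- The trace of `e : A ⊕ K ≃ B ⊕ K` along `K`: the point of `B` where the path of `a` exits. -/
def traceFun (a : A) : B :=
  (tracePath e a (exitTime e a)).getLeft (Nat.find_spec (exists_tracePath_isLeft e a))

theorem tracePath_exitTime (a : A) : tracePath e a (exitTime e a) = Sum.inl (traceFun e a) :=
  (Sum.inl_getLeft _ _).symm

theorem traceFun_eq_of_tracePath_eq_inl {a : A} {t : ℕ} {b : B}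
    (h : tracePath e a t = Sum.inl b) : traceFun e a = b := by
  have hle : exitTime e a ≤ t := Nat.find_min' _ (by rw [h]; rfl)
  have hexit := tracePath_add_of_eq_inl e (tracePath_exitTime e a) (t - exitTime e a)
  rw [Nat.sub_add_cancel hle, h] at hexit
  exact (Sum.inl_injective hexit).symm

theorem traceFun_injective : Function.Injective (traceFun e) := by
  intro a a' h
  have hbefore : ∀ a, ∀ i < exitTime e a, (tracePath e a i).isRight :=
    fun a _ hi => Sum.not_isLeft.1 (Nat.find_min _ hi)
  refine (eq_of_tracePath_eq e ?_ (hbefore a) (hbefore a')).1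
  rw [tracePath_exitTime, tracePath_exitTime, h]

theorem traceFun_map {A' B' K' : Type*} [Finite K'] (e' : A' ⊕ K' ≃ B' ⊕ K') {α : A → A'}
    {β : B → B'} {κ : K → K'} (he : ∀ x, e' (Sum.map α κ x) = Sum.map β κ (e x)) (a : A) :
    traceFun e' (α a) = β (traceFun e a) := by
  have hpath : ∀ t, tracePath e' (α a) t = Sum.map β κ (tracePath e a t) := by
    intro t
    induction t with
    | zero => exact he (Sum.inl a)
    | succ t ih =>
      rw [tracePath_succ, tracePath_succ, ih]
      rcases tracePath e a t with b | k
      · rfl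
      · exact he (Sum.inr k)
  refine traceFun_eq_of_tracePath_eq_inl e' (t := exitTime e a) ?_
  rw [hpath, tracePath_exitTime]
  rfl

theorem comp_traceFun {Z : Type*} {fA : A → Z} {fB : B → Z} {fK : K → Z}
    (he : ∀ x, Sum.elim fB fK (e x) = Sum.elim fA fK x) (a : A) :
    fB (traceFun e a) = fA a := by
  have hpath : ∀ t, Sum.elim fB fK (tracePath e a t) = fA a := by
    intro t
    induction t with
    | zero => exact he (Sum.inl a)
    | succ t ih =>
      rw [tracePath_succ, ← ih]
      rcases tracePath e a t with b | k
      · rfl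
      · exact he (Sum.inr k)
  simpa only [tracePath_exitTime, Sum.elim_inl] using hpath (exitTime e a)

end Trace

section Burnside

variable {X : FinGSet G}

theorem BurnIso.of_bijective {s t : BurnPre G X} {f : s.A.carrier → t.A.carrier}
    (hf : IsEquivariant G f) (hbij : Function.Bijective f) (hov : ∀ x, t.f (f x) = s.f x) :
    BurnIso s t :=
  ⟨Equiv.ofBijective f hbij, hf, hov⟩

theorem BurnIso.refl (s : BurnPre G X) : BurnIso s s :=
  ⟨Equiv.refl _, fun _ _ => rfl, fun _ => rfl⟩

theorem BurnIso.symm {s t : BurnPre G X} : BurnIso s t → BurnIso t s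
  | ⟨e, he, hov⟩ => ⟨e.symm, he.symm, fun y => by rw [← hov (e.symm y), e.apply_symm_apply]⟩

theorem BurnIso.trans {s t r : BurnPre G X} : BurnIso s t → BurnIso t r → BurnIso s r
  | ⟨e, he, hov⟩, ⟨e', he', hov'⟩ =>
    ⟨e.trans e', fun g x => by rw [Equiv.trans_apply, he, he']; rfl,
      fun x => (hov' _).trans (hov x)⟩

def bSum (s t : BurnPre G X) : BurnPre G X :=
  ⟨sumG s.A t.A, sumElimHom s.f t.f⟩

theorem BurnIso.bSum_congr {s s' t t' : BurnPre G X} :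
    BurnIso s s' → BurnIso t t' → BurnIso (bSum s t) (bSum s' t')
  | ⟨e, he, hov⟩, ⟨e', he', hov'⟩ =>
    ⟨Equiv.sumCongr e e', by
      rintro g (x | x)
      exacts [congrArg Sum.inl (he g x), congrArg Sum.inr (he' g x)], by
      rintro (x | x)
      exacts [hov x, hov' x]⟩

/-- The cancelled isomorphism is the trace of the given one along `r`. -/
theorem BurnIso.bSum_right_cancel {s t r : BurnPre G X} (h : BurnIso (bSum s r) (bSum t r)) :
    BurnIso s t := by
  obtain ⟨e, he, hov⟩ := h
  let e' : s.A.carrier ⊕ r.A.carrier ≃ t.A.carrier ⊕ r.A.carrier := e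
  have hcard : Nat.card s.A.carrier = Nat.card t.A.carrier := by
    have := Nat.card_congr e'
    rw [Nat.card_sum, Nat.card_sum] at this
    omega
  refine BurnIso.of_bijective (f := traceFun e') (fun g a => ?_)
    ((Nat.bijective_iff_injective_and_card _).2 ⟨traceFun_injective e', hcard⟩)
    (comp_traceFun e' (fA := s.f) (fB := t.f) (fK := r.f) hov)
  refine traceFun_map e' e' (κ := (g • ·)) (fun x => ?_) a
  simp only [← Sum.smul_def]
  exact he g x

end Burnside

def subG {V : FinGSet G} (p : SubMulAction G V.carrier) : FinGSet G := mkG G p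

def subHom {V : FinGSet G} (p : SubMulAction G V.carrier) : (subG p).carrier →[G] V.carrier :=
  ⟨Subtype.val, fun _ _ => rfl⟩

section FibreParts

variable {U V : Type} [MulAction G U] [MulAction G V]

def emptyFibers (i : U →[G] V) : SubMulAction G V where
  carrier := {v | ∀ u, i u ≠ v}
  smul_mem' a v hv u hu := hv (a⁻¹ • u) (by rw [map_smul, hu, inv_smul_smul])

/-- The points of `U` that are alone in their `i`-fibre. -/
def singletonFibers (i : U →[G] V) : SubMulAction G U where
  carrier := {u | ∀ u', i u' = i u → u' = u}
  smul_mem' a u hu u' hu' := by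
    rw [← hu (a⁻¹ • u') (by rw [map_smul, hu', map_smul, inv_smul_smul]), smul_inv_smul]

def sumSubEquiv (p : SubMulAction G (U ⊕ V)) (pU : SubMulAction G U) (pV : SubMulAction G V)
    (hU : ∀ u, Sum.inl u ∈ p ↔ u ∈ pU) (hV : ∀ v, Sum.inr v ∈ p ↔ v ∈ pV) : p ≃ pU ⊕ pV :=
  Equiv.subtypeSum.trans (Equiv.sumCongr (Equiv.subtypeEquivRight hU) (Equiv.subtypeEquivRight hV))

theorem sumSubEquiv_equivariant (p : SubMulAction G (U ⊕ V)) (pU : SubMulAction G U)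
    (pV : SubMulAction G V) (hU : ∀ u, Sum.inl u ∈ p ↔ u ∈ pU)
    (hV : ∀ v, Sum.inr v ∈ p ↔ v ∈ pV) : IsEquivariant G ⇑(sumSubEquiv p pU pV hU hV) := by
  rintro g ⟨u | v, h⟩ <;> rfl

end FibreParts

section DegreeZero

variable {M : SemiMackey G} {X : FinGSet G}

/-- The degree-zero part of a pair. -/
def PreT.emptyFiberPart (a : PreT M X) : BurnPre G X :=
  ⟨subG (emptyFibers a.i), gcomp a.j (subHom _)⟩

theorem emptyFiberPart_iso {a b : PreT M X} (h : IsoRel M X a b) :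
    BurnIso a.emptyFiberPart b.emptyFiberPart := by
  obtain ⟨f, g, -, hg, hi, hj, -⟩ := h
  have hmem : ∀ v, v ∈ emptyFibers b.i ↔ g v ∈ emptyFibers a.i := fun v => by
    change (∀ u, b.i u ≠ v) ↔ ∀ u, a.i u ≠ g v
    rw [← f.forall_congr_right]
    simp only [hi, g.injective.ne_iff]
  exact BurnIso.symm ⟨g.subtypeEquiv hmem, fun a v => Subtype.ext (hg a v.1), fun v => hj v.1⟩

theorem emptyFiberPart_distrib {W U V A B : FinGSet G} (k : W.carrier →[G] U.carrier)
    (i : U.carrier →[G] V.carrier) (j : V.carrier →[G] X.carrier)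
    (f : A.carrier →[G] W.carrier) (g : A.carrier →[G] B.carrier)
    (h : B.carrier →[G] V.carrier) (hd : IsDistributor k i f g h) (w : M.obj W) :
    BurnIso (⟨U, V, i, j, M.tr k w⟩ : PreT M X).emptyFiberPart
      (⟨A, B, g, gcomp j h, M.res f w⟩ : PreT M X).emptyFiberPart := by
  obtain ⟨α, β, -, -, -, hgβ, hhβ⟩ := hd
  have hmem : ∀ b, b ∈ emptyFibers g ↔ h b ∈ emptyFibers i := by
    intro b
    change (∀ x, g x ≠ b) ↔ ∀ u, i u ≠ h b
    constructor
    · intro hb u hu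
      let q : ECan k i := ⟨(u, β b), hu.trans (hhβ b).symm⟩
      refine hb (α.symm q) (β.injective ?_)
      rw [hgβ, α.apply_symm_apply]
    · intro hb x hx
      refine hb (α x).1.1 ((α x).2.trans ?_)
      change ((α x).1.2).pt = h b
      rw [← hgβ, hx, hhβ]
  refine BurnIso.symm (BurnIso.of_bijective (f := fun b => ⟨h b.1, (hmem b.1).1 b.2⟩)
    (fun a b => Subtype.ext (map_smul h a b.1)) ⟨?_, ?_⟩ (fun _ => rfl))
  · -- over a point with empty fibre there is exactly one section
    rintro ⟨b, hb⟩ ⟨b', _⟩ hbb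
    have hpt : h b = h b' := congrArg Subtype.val hbb
    refine Subtype.ext (β.injective (Sec.ext' ((hhβ b).trans (hpt.trans (hhβ b').symm)) ?_))
    exact fun y hy _ => absurd (hy.trans (hhβ b)) ((hmem b).1 hb y)
  · rintro ⟨v, hv⟩
    let σ : Sec k i := ⟨v, fun y hy => absurd hy (hv y), fun y hy => absurd hy (hv y)⟩
    have hσ : h (β.symm σ) = v := by rw [← hhβ, β.apply_symm_apply]
    exact ⟨⟨β.symm σ, (hmem _).2 (hσ ▸ hv)⟩, Subtype.ext hσ⟩

theorem emptyFiberPart_addPre (a b : PreT M X) :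
    BurnIso (addPre M a b).emptyFiberPart (bSum a.emptyFiberPart b.emptyFiberPart) := by
  refine ⟨sumSubEquiv _ _ _ (fun v => ?_) (fun v => ?_), sumSubEquiv_equivariant _ _ _ _ _,
    by rintro ⟨v | v, _⟩ <;> rfl⟩ <;>
  · change (∀ u : a.U.carrier ⊕ b.U.carrier, Sum.map a.i b.i u ≠ _) ↔ ∀ u, _
    simp [Sum.forall]

theorem emptyFiberPart_bPair (s : BurnPre G X) : BurnIso (bPair M s).emptyFiberPart s :=
  BurnIso.of_bijective (f := Subtype.val) (fun _ _ => rfl)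
    ⟨Subtype.val_injective, fun v => ⟨⟨v, fun u => u.elim⟩, rfl⟩⟩ (fun _ => rfl)

theorem emptyFiberPart_of_rel {a b : PreT M X} (h : STRel M X a b) :
    BurnIso a.emptyFiberPart b.emptyFiberPart := by
  cases h with
  | iso h => exact emptyFiberPart_iso h
  | distrib k i j f g h hd w => exact emptyFiberPart_distrib k i j f g h hd w

theorem emptyFiberPart_of_quot_eq {a b : PreT M X} (h : Quot.mk (STRel M X) a = Quot.mk _ b) :
    BurnIso a.emptyFiberPart b.emptyFiberPart := by
  obtain hr := Quot.eqvGen_exact h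
  clear h
  induction hr with
  | rel _ _ h => exact emptyFiberPart_of_rel h
  | refl => exact .refl _
  | symm _ _ _ ih => exact ih.symm
  | trans _ _ _ _ _ ih ih' => exact ih.trans ih'

theorem quot_addPre_bPair_eq {s₁ s₂ s₁' s₂' : BurnPre G X}
    (h : BurnIso (bSum s₁' s₂') (bSum s₁ s₂)) :
    Quot.mk (STRel M X) (addPre M (bPair M s₁) (bPair M s₂)) =
      Quot.mk _ (addPre M (bPair M s₁') (bPair M s₂')) := by
  obtain ⟨e, he, hov⟩ := h
  exact Quot.sound (STRel.iso ⟨Equiv.refl _, e, fun _ _ => rfl, he,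
    by rintro (u | u) <;> exact u.elim, hov, M.res_id _⟩)

theorem emptyFiberPart_addPre_bPair (s s' : BurnPre G X) :
    BurnIso (addPre M (bPair M s) (bPair M s')).emptyFiberPart (bSum s s') :=
  (emptyFiberPart_addPre _ _).trans (.bSum_congr (emptyFiberPart_bPair s) (emptyFiberPart_bPair s'))

end DegreeZero

section SingletonSections

variable {W U V : FinGSet G} (k : W.carrier →[G] U.carrier) (i : U.carrier →[G] V.carrier)

/-- Over the image of a point `u = k w` alone in its `i`-fibre, the section taking the value `w`. -/
def singletonSec (p : Pb (subHom (singletonFibers i)) k) : Sec k i :=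
  ⟨i p.1.1.1, fun _ _ => p.1.2, fun y hy => p.2.symm.trans (p.1.1.2 y hy).symm⟩

def singletonSecEquiv : Pb (subHom (singletonFibers i)) k ≃
    (subG (V := mkG G (ECan k i)) (singletonFibers (pi2Hom k i))).carrier where
  toFun p := ⟨⟨(p.1.1.1, singletonSec k i p), rfl⟩, fun q hq => by
    have hy : q.1.1 = p.1.1.1 := p.1.1.2 _ (q.2.trans (congrArg Sec.pt hq))
    exact Subtype.ext (Prod.ext hy hq)⟩
  invFun q := ⟨(⟨q.1.1.1, fun u' hu' =>
      congrArg (fun r : ECan k i => r.1.1) (q.2 ⟨(u', q.1.1.2), hu'.trans q.1.2⟩ rfl)⟩,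
    q.1.1.2.sec q.1.1.1 q.1.2), (q.1.1.2.isSec _ _).symm⟩
  left_inv _ := rfl
  right_inv q := by
    refine Subtype.ext (Subtype.ext (Prod.ext rfl (Sec.ext' q.1.2 fun y _ hy' => ?_)))
    refine Sec.sec_congr q.1.1.2 ?_
    exact (congrArg (fun r : ECan k i => r.1.1) (q.2 ⟨(y, q.1.1.2), hy'⟩ rfl)).symm

theorem singletonSecEquiv_equivariant : IsEquivariant G ⇑(singletonSecEquiv k i) := by
  intro a p
  refine Subtype.ext (Subtype.ext (Prod.ext rfl (Sec.ext' (map_smul i a p.1.1.1) ?_)))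
  intro y _ hy'
  have hinv : i (a⁻¹ • y) = (singletonSec k i p).pt := by
    rw [map_smul, show i y = a • i p.1.1.1 from hy', inv_smul_smul]
    rfl
  exact (Sec.smul_sec a (singletonSec k i p) y hy' hinv).symm

end SingletonSections

section DegreeOne

variable {M : SemiMackey G} {X : FinGSet G}

/-- The degree-one part of a pair. -/
def PreT.singletonFiberPart (a : PreT M X) : M.obj X :=
  M.tr (gcomp a.j (gcomp a.i (subHom (singletonFibers a.i)))) (M.res (subHom _) a.u)

theorem singletonFiberPart_thetaPre (x : M.obj X) : (thetaPre M X x).singletonFiberPart = x := by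
  have hall : ∀ x, x ∈ singletonFibers (gid G X.carrier) := fun _ _ h => h
  calc (thetaPre M X x).singletonFiberPart = M.tr (gid G X.carrier) (M.res (gid G X.carrier) x) :=
        M.tr_res_eq_of_equiv (Q := X) (Equiv.subtypeUnivEquiv hall) (fun _ _ => rfl)
          (fun _ => rfl) (fun _ => rfl) x
    _ = x := by rw [M.res_id, M.tr_id]

theorem singletonFiberPart_iso {a b : PreT M X} (h : IsoRel M X a b) :
    a.singletonFiberPart = b.singletonFiberPart := by
  obtain ⟨f, g, hf, -, hi, hj, hu⟩ := h
  have hmem : ∀ u, u ∈ singletonFibers b.i ↔ f u ∈ singletonFibers a.i := fun u => by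
    change (∀ u', b.i u' = b.i u → u' = u) ↔ ∀ u', a.i u' = a.i (f u) → u' = f u
    rw [← f.forall_congr_right]
    simp only [hi, g.injective.eq_iff, f.injective.eq_iff]
  rw [PreT.singletonFiberPart, PreT.singletonFiberPart, ← hu, M.res_comp]
  refine (M.tr_res_eq_of_equiv (P := subG (singletonFibers b.i)) (Q := subG (singletonFibers a.i))
    (f.subtypeEquiv hmem) (fun g u => Subtype.ext (hf g u.1))
    (fun u => ?_) (fun _ => rfl) a.u).symm
  change a.j (a.i (f u.1)) = b.j (b.i u.1)
  rw [hi, hj]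

theorem singletonFiberPart_addPre (a b : PreT M X) :
    (addPre M a b).singletonFiberPart = M.add a.singletonFiberPart b.singletonFiberPart := by
  have hU : ∀ u, Sum.inl u ∈ singletonFibers (addPre M a b).i ↔ u ∈ singletonFibers a.i := by
    intro u
    change (∀ u' : a.U.carrier ⊕ b.U.carrier, Sum.map a.i b.i u' = Sum.inl (a.i u) →
      u' = Sum.inl u) ↔ ∀ u', a.i u' = a.i u → u' = u
    simp [Sum.forall]
  have hV : ∀ u, Sum.inr u ∈ singletonFibers (addPre M a b).i ↔ u ∈ singletonFibers b.i := by
    intro u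
    change (∀ u' : a.U.carrier ⊕ b.U.carrier, Sum.map a.i b.i u' = Sum.inr (b.i u) →
      u' = Sum.inr u) ↔ ∀ u', b.i u' = b.i u → u' = u
    simp [Sum.forall]
  calc (addPre M a b).singletonFiberPart
      = M.tr (sumElimHom (gcomp a.j (gcomp a.i (subHom (singletonFibers a.i))))
            (gcomp b.j (gcomp b.i (subHom (singletonFibers b.i)))))
          (M.res (sumMapHom (subHom _) (subHom _)) (M.pairElt a.u b.u)) :=
        M.tr_res_eq_of_equiv (Q := sumG (subG _) (subG _)) (sumSubEquiv _ _ _ hU hV)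
          (sumSubEquiv_equivariant _ _ _ hU hV) (by rintro ⟨u | u, _⟩ <;> rfl)
          (by rintro ⟨u | u, _⟩ <;> rfl) _
    _ = M.add a.singletonFiberPart b.singletonFiberPart := by
        rw [SemiMackey.res_sumMap_pairElt, SemiMackey.tr_sumElim_pairElt]
        rfl

theorem singletonFiberPart_tr_eq {W U V : FinGSet G} (k : W.carrier →[G] U.carrier)
    (i : U.carrier →[G] V.carrier) (j : V.carrier →[G] X.carrier) (w : M.obj W) :
    (⟨U, V, i, j, M.tr k w⟩ : PreT M X).singletonFiberPart =
      (⟨mkG G (ECan k i), mkG G (Sec k i), pi2Hom k i, gcomp j (pHom k i),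
        M.res (evalHom k i) w⟩ : PreT M X).singletonFiberPart := by
  dsimp only [PreT.singletonFiberPart]
  refine (congrArg _ (M.mackey _ k w)).trans ((M.tr_comp _ _ _).trans ?_)
  refine Eq.trans ?_ (congrArg _ (M.res_comp _ _ w).symm)
  exact M.tr_res_eq_of_equiv (singletonSecEquiv k i) (singletonSecEquiv_equivariant k i)
    (fun _ => rfl) (fun _ => rfl) w

theorem singletonFiberPart_distrib {W U V A B : FinGSet G} (k : W.carrier →[G] U.carrier)
    (i : U.carrier →[G] V.carrier) (j : V.carrier →[G] X.carrier)
    (f : A.carrier →[G] W.carrier) (g : A.carrier →[G] B.carrier)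
    (h : B.carrier →[G] V.carrier) (hd : IsDistributor k i f g h) (w : M.obj W) :
    (⟨U, V, i, j, M.tr k w⟩ : PreT M X).singletonFiberPart =
      (⟨A, B, g, gcomp j h, M.res f w⟩ : PreT M X).singletonFiberPart := by
  obtain ⟨α, β, hα, hβ, hfα, hgβ, hhβ⟩ := hd
  refine (singletonFiberPart_tr_eq k i j w).trans (singletonFiberPart_iso ⟨α, β, hα, hβ,
    fun x => (hgβ x).symm, fun b => congrArg j (hhβ b), (M.res_comp _ _ w).trans ?_⟩)
  exact congrArg (M.res · w) (MulActionHom.ext hfα)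

theorem singletonFiberPart_of_rel {a b : PreT M X} (h : STRel M X a b) :
    a.singletonFiberPart = b.singletonFiberPart := by
  cases h with
  | iso h => exact singletonFiberPart_iso h
  | distrib k i j f g h hd w => exact singletonFiberPart_distrib k i j f g h hd w

end DegreeOne

section GroupCompletion

variable {M R : SemiMackey G}

def DescendsToST (c : ∀ X : FinGSet G, PreT M X → R.obj X) : Prop :=
  ∀ (X : FinGSet G) (a b : PreT M X), Quot.mk (STRel M X) a = Quot.mk _ b → c X a = c X b

/-- The injectivity half of the universal property of a group completion of `sT(M)`. -/
def CancelsInST (c : ∀ X : FinGSet G, PreT M X → R.obj X) : Prop :=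
  ∀ (X : FinGSet G) (a b : PreT M X), c X a = c X b →
    ∃ k : PreT M X, Quot.mk (STRel M X) (addPre M a k) = Quot.mk _ (addPre M b k)

variable {c : ∀ X : FinGSet G, PreT M X → R.obj X}

theorem emptyFiberPart_burnIso_of_c_eq (hc_inj : CancelsInST c) {X : FinGSet G}
    {a b : PreT M X} (h : c X a = c X b) :
    BurnIso a.emptyFiberPart b.emptyFiberPart := by
  obtain ⟨k, hk⟩ := hc_inj X a b h
  exact BurnIso.bSum_right_cancel ((emptyFiberPart_addPre a k).symm.trans
    ((emptyFiberPart_of_quot_eq hk).trans (emptyFiberPart_addPre b k)))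

theorem singletonFiberPart_eq_of_c_eq (hc_inj : CancelsInST c)
    (hneg : ∀ (X : FinGSet G) (x : M.obj X), ∃ y, M.add x y = M.zero X)
    {X : FinGSet G} {a b : PreT M X} (h : c X a = c X b) :
    a.singletonFiberPart = b.singletonFiberPart := by
  obtain ⟨k, hk⟩ := hc_inj X a b h
  have hk' : (addPre M a k).singletonFiberPart = (addPre M b k).singletonFiberPart :=
    congrArg (Quot.lift _ fun _ _ => singletonFiberPart_of_rel) hk
  rw [singletonFiberPart_addPre, singletonFiberPart_addPre] at hk'
  exact M.add_right_cancel hneg hk'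

theorem c_thetaPre_zero (hc_rel : DescendsToST c)
    (hc_tr : ∀ {X Y : FinGSet G} (f : X.carrier →[G] Y.carrier) (a : PreT M X),
      c Y (trPre M f a) = R.tr f (c X a)) (X : FinGSet G) :
    c X (thetaPre M X (M.zero X)) = R.zero X := by
  rw [SemiMackey.zero, hc_rel X _ _ (quot_thetaPre_tr _ _)]
  exact (hc_tr (initHom X) (thetaPre M _ _)).trans
    (congrArg _ (@Subsingleton.elim _ R.empty_subsingleton _ _))

theorem c_thetaPre_add (hc_rel : DescendsToST c)
    (hc_add : ∀ (X : FinGSet G) (a b : PreT M X), c X (addPre M a b) = R.add (c X a) (c X b))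
    {X : FinGSet G} (u v : M.obj X) :
    c X (thetaPre M X (M.add u v)) = R.add (c X (thetaPre M X u)) (c X (thetaPre M X v)) := by
  rw [hc_rel X _ _ (quot_thetaPre_add u v), hc_add]

theorem bijOn_c_thetaPre (hc_rel : DescendsToST c)
    (hc_tr : ∀ {X Y : FinGSet G} (f : X.carrier →[G] Y.carrier) (a : PreT M X),
      c Y (trPre M f a) = R.tr f (c X a))
    (hc_add : ∀ (X : FinGSet G) (a b : PreT M X), c X (addPre M a b) = R.add (c X a) (c X b))
    (hc_inj : CancelsInST c)
    (hneg : ∀ (X : FinGSet G) (x : M.obj X), ∃ y, M.add x y = M.zero X) (X : FinGSet G) :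
    Set.BijOn (fun x : M.obj X => c X (thetaPre M X x)) Set.univ
      {t : R.obj X | ∃ a b : PreT M X, DegN 1 a ∧ DegN 1 b ∧ R.add t (c X b) = c X a} := by
  have hdeg : ∀ x, DegN 1 (thetaPre M X x) :=
    fun x => (degN_one_iff_bijective _).2 Function.bijective_id
  refine ⟨fun x _ => ⟨_, _, hdeg x, hdeg (M.zero X), ?_⟩, fun x _ y _ hxy => ?_, ?_⟩
  · rw [c_thetaPre_zero hc_rel hc_tr, R.add_zero]
  · simpa only [singletonFiberPart_thetaPre] using singletonFiberPart_eq_of_c_eq hc_inj hneg hxy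
  · rintro t ⟨a, b, ha, hb, hab⟩
    obtain ⟨xa, hxa⟩ := exists_quot_eq_thetaPre_of_degN_one a ha
    obtain ⟨xb, hxb⟩ := exists_quot_eq_thetaPre_of_degN_one b hb
    obtain ⟨y, hy⟩ := hneg X xb
    refine ⟨M.add xa y, trivial, ?_⟩
    rw [hc_rel X _ _ hxa, hc_rel X _ _ hxb] at hab
    change c X (thetaPre M X (M.add xa y)) = t
    rw [c_thetaPre_add hc_rel hc_add, ← hab, R.add_assoc, ← c_thetaPre_add hc_rel hc_add, hy,
      c_thetaPre_zero hc_rel hc_tr, R.add_zero]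

end GroupCompletion

/-- `T(M)` is modelled by the Tambara functor `T` with the levelwise group completion `c` of
`sT(M)`, and `Tⁿ(M)(X)` by the differences `c a - c b` of pairs of degree `n`. -/
theorem statement8_general (M : Mackey G)
    (T : Tambara G) (c : ∀ X : FinGSet G, PreT M.toSemiMackey X → T.obj X)
    (hc_rel : ∀ (X : FinGSet G) (a b : PreT M.toSemiMackey X),
      Quot.mk (STRel M.toSemiMackey X) a = Quot.mk (STRel M.toSemiMackey X) b →
        c X a = c X b)
    (hc_tr : ∀ {X Y : FinGSet G} (f : X.carrier →[G] Y.carrier) (a : PreT M.toSemiMackey X),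
      c Y (trPre M.toSemiMackey f a) = T.tr f (c X a))
    (hc_add : ∀ (X : FinGSet G) (a b : PreT M.toSemiMackey X),
      c X (addPre M.toSemiMackey a b) = T.toSemiMackey.add (c X a) (c X b))
    (hc_inj : ∀ (X : FinGSet G) (a b : PreT M.toSemiMackey X),
      c X a = c X b ↔ ∃ k : PreT M.toSemiMackey X,
        Quot.mk (STRel M.toSemiMackey X) (addPre M.toSemiMackey a k) =
          Quot.mk (STRel M.toSemiMackey X) (addPre M.toSemiMackey b k)) :
    -- `A ≅ T⁰(M)`: every element of the degree-0 part is a difference of classes of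
    -- `G`-sets over `X`, ...
    (∀ (X : FinGSet G) (t : T.obj X),
      (∃ a b : PreT M.toSemiMackey X, DegN 0 a ∧ DegN 0 b ∧
          T.toSemiMackey.add t (c X b) = c X a) →
      ∃ s₁ s₂ : BurnPre G X,
        T.toSemiMackey.add t (c X (bPair M.toSemiMackey s₂)) = c X (bPair M.toSemiMackey s₁)) ∧
    -- ... and two differences agree exactly when they agree in the Burnside group:
    (∀ (X : FinGSet G) (s₁ s₂ s₁' s₂' : BurnPre G X),
      T.toSemiMackey.add (c X (bPair M.toSemiMackey s₁)) (c X (bPair M.toSemiMackey s₂')) =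
        T.toSemiMackey.add (c X (bPair M.toSemiMackey s₁')) (c X (bPair M.toSemiMackey s₂)) ↔
      BurnIso (⟨sumG s₁.A s₂'.A, sumElimHom s₁.f s₂'.f⟩ : BurnPre G X)
        ⟨sumG s₁'.A s₂.A, sumElimHom s₁'.f s₂.f⟩) ∧
    -- `M ≅ T¹(M)` via `θ_M`:
    (∀ X : FinGSet G,
      Set.BijOn (fun x : M.obj X => c X (thetaPre M.toSemiMackey X x)) Set.univ
        {t : T.obj X | ∃ a b : PreT M.toSemiMackey X, DegN 1 a ∧ DegN 1 b ∧
          T.toSemiMackey.add t (c X b) = c X a}) := by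
  have hc_inj' := fun X a b => (hc_inj X a b).1
  refine ⟨fun X t ⟨a, b, ha, hb, hab⟩ => ⟨⟨a.V, a.j⟩, ⟨b.V, b.j⟩, ?_⟩, fun X s₁ s₂ s₁' s₂' => ?_,
    bijOn_c_thetaPre hc_rel hc_tr hc_add hc_inj' M.hasNeg⟩
  · rwa [← hc_rel X a _ (quot_eq_bPair_of_degN_zero a ha),
      ← hc_rel X b _ (quot_eq_bPair_of_degN_zero b hb)]
  · rw [← hc_add, ← hc_add]
    exact ⟨fun h => (emptyFiberPart_addPre_bPair _ _).symm.trans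
        ((emptyFiberPart_burnIso_of_c_eq hc_inj' h).trans (emptyFiberPart_addPre_bPair _ _)),
      fun h => hc_rel X _ _ (quot_addPre_bPair_eq h.symm)⟩

/-- Let `T(M) = ⊕ₙ Tⁿ(M)` be the free Tambara functor on the Mackey
functor `M` (presented by a Tambara functor `T` together with a levelwise group
completion `c` of `sT(M)`, as in the characterization below).  Then the unique map of
Tambara functors `A → T(M)` from the Burnside Mackey functor induces an isomorphism
`A ≅ T⁰(M)` (on differences of classes of `G`-sets over `X`), and the universal map
`θ_M : M → T(M)` induces an isomorphism of Mackey functors `M ≅ T¹(M)`. -/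
theorem statement8 [Finite G] (M : Mackey G)
    (T : Tambara G) (c : ∀ X : FinGSet G, PreT M.toSemiMackey X → T.obj X)
    (hc_rel : ∀ (X : FinGSet G) (a b : PreT M.toSemiMackey X),
      Quot.mk (STRel M.toSemiMackey X) a = Quot.mk (STRel M.toSemiMackey X) b →
        c X a = c X b)
    (hc_tr : ∀ {X Y : FinGSet G} (f : X.carrier →[G] Y.carrier) (a : PreT M.toSemiMackey X),
      c Y (trPre M.toSemiMackey f a) = T.tr f (c X a))
    (hc_res : ∀ {X Y : FinGSet G} (f : Y.carrier →[G] X.carrier) (a : PreT M.toSemiMackey X),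
      c Y (resPre M.toSemiMackey f a) = T.res f (c X a))
    (hc_nm : ∀ {X Y : FinGSet G} (f : X.carrier →[G] Y.carrier) (a : PreT M.toSemiMackey X),
      c Y (normPre M.toSemiMackey f a) = T.nm f (c X a))
    (hc_add : ∀ (X : FinGSet G) (a b : PreT M.toSemiMackey X),
      c X (addPre M.toSemiMackey a b) = T.toSemiMackey.add (c X a) (c X b))
    (hc_sur : ∀ (X : FinGSet G) (t : T.obj X), ∃ a b : PreT M.toSemiMackey X,
      T.toSemiMackey.add t (c X b) = c X a)
    (hc_inj : ∀ (X : FinGSet G) (a b : PreT M.toSemiMackey X),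
      c X a = c X b ↔ ∃ k : PreT M.toSemiMackey X,
        Quot.mk (STRel M.toSemiMackey X) (addPre M.toSemiMackey a k) =
          Quot.mk (STRel M.toSemiMackey X) (addPre M.toSemiMackey b k))
    (hc_free : ∀ (R : Tambara G) (φ : SMackHom M.toSemiMackey R.toSemiMackey),
      ∃! F : STambHom T.toSemiTambara R.toSemiTambara,
        ∀ (X : FinGSet G) (x : M.obj X),
          F.app X (c X (thetaPre M.toSemiMackey X x)) = φ.app X x) :
    -- `A ≅ T⁰(M)`: every element of the degree-0 part is a difference of classes of
    -- `G`-sets over `X`, ...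
    (∀ (X : FinGSet G) (t : T.obj X),
      (∃ a b : PreT M.toSemiMackey X, DegN 0 a ∧ DegN 0 b ∧
          T.toSemiMackey.add t (c X b) = c X a) →
      ∃ s₁ s₂ : BurnPre G X,
        T.toSemiMackey.add t (c X (bPair M.toSemiMackey s₂)) = c X (bPair M.toSemiMackey s₁)) ∧
    -- ... and two differences agree exactly when they agree in the Burnside group:
    (∀ (X : FinGSet G) (s₁ s₂ s₁' s₂' : BurnPre G X),
      T.toSemiMackey.add (c X (bPair M.toSemiMackey s₁)) (c X (bPair M.toSemiMackey s₂')) =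
        T.toSemiMackey.add (c X (bPair M.toSemiMackey s₁')) (c X (bPair M.toSemiMackey s₂)) ↔
      BurnIso (⟨sumG s₁.A s₂'.A, sumElimHom s₁.f s₂'.f⟩ : BurnPre G X)
        ⟨sumG s₁'.A s₂.A, sumElimHom s₁'.f s₂.f⟩) ∧
    -- `M ≅ T¹(M)` via `θ_M`:
    (∀ X : FinGSet G,
      Set.BijOn (fun x : M.obj X => c X (thetaPre M.toSemiMackey X x)) Set.univ
        {t : T.obj X | ∃ a b : PreT M.toSemiMackey X, DegN 1 a ∧ DegN 1 b ∧
          T.toSemiMackey.add t (c X b) = c X a}) :=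
  statement8_general M T c hc_rel hc_tr hc_add hc_inj
end Tamb
end

section
/- Let G be a finite group and let T denote the free Tambara functor monad on Mack(G), i.e., the monad induced by the adjunction between the free Tambara functor functor T : Mack(G) → Tamb(G) and the forgetful functor Tamb(G) → Mack(G). Then the Eilenberg–Moore comparison functor Tamb(G) → Mack(G)[T] is an isomorphism of categories; that is, the forgetful functor Tamb(G) → Mack(G) is monadic and Tamb(G) is isomorphic to the category of algebras over the monad T. Moreover, given a T-algebra (R, m : T(R) → R), the norm maps of the corresponding Tambara functor structure on R are n_f := m(Y) ∘ n_f^{T(R)} ∘ θ_R(X) for G-maps f : X → Y, where θ_R : R → T(R) is the unit of the monad. -/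
set_option autoImplicit false

namespace Tamb

variable {G : Type} [Group G]

section CoreCat

open CategoryTheory

variable {G : Type} [Group G]

/-- The identity map of semi-Mackey functors. -/
def SMackHom.idH (M : SemiMackey G) : SMackHom M M where
  app _ x := x
  app_res _ _ := rfl
  app_tr _ _ := rfl

/-- Composition of maps of semi-Mackey functors. -/
def SMackHom.compH {M N P : SemiMackey G} (f : SMackHom M N) (g : SMackHom N P) :
    SMackHom M P where
  app X x := g.app X (f.app X x)
  app_res h y := by
    show g.app _ (f.app _ (M.res h y)) = P.res h (g.app _ (f.app _ y))
    rw [f.app_res, g.app_res]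
  app_tr h x := by
    show g.app _ (f.app _ (M.tr h x)) = P.tr h (g.app _ (f.app _ x))
    rw [f.app_tr, g.app_tr]

theorem SMackHom.extH {M N : SemiMackey G} {f g : SMackHom M N} (h : f.app = g.app) :
    f = g := by
  cases f; cases g; cases h; rfl

/-- The identity map of semi-Tambara functors. -/
def STambHom.idH (M : SemiTambara G) : STambHom M M :=
  ⟨SMackHom.idH M.toSemiMackey, fun _ _ => rfl⟩

/-- Composition of maps of semi-Tambara functors. -/
def STambHom.compH {M N P : SemiTambara G} (f : STambHom M N) (g : STambHom N P) :
    STambHom M P :=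
  ⟨SMackHom.compH f.toSMackHom g.toSMackHom, fun h x => by
    show g.app _ (f.app _ (M.nm h x)) = P.nm h (g.app _ (f.app _ x))
    rw [f.app_nm, g.app_nm]⟩

theorem STambHom.extH {M N : SemiTambara G} {f g : STambHom M N} (h : f.app = g.app) :
    f = g := by
  obtain ⟨⟨fa, fr, ft⟩, fn⟩ := f
  obtain ⟨⟨ga, gr, gt⟩, gn⟩ := g
  cases h
  rfl

/-- The category `Mack(G)` of Mackey functors over `G`. -/
instance : Category (Mackey G) where
  Hom M N := SMackHom M.toSemiMackey N.toSemiMackey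
  id M := SMackHom.idH M.toSemiMackey
  comp f g := SMackHom.compH f g
  id_comp _ := SMackHom.extH rfl
  comp_id _ := SMackHom.extH rfl
  assoc _ _ _ := SMackHom.extH rfl

/-- The category `Tamb(G)` of Tambara functors over `G`. -/
instance : Category (Tambara G) where
  Hom M N := STambHom M.toSemiTambara N.toSemiTambara
  id M := STambHom.idH M.toSemiTambara
  comp f g := STambHom.compH f g
  id_comp _ := STambHom.extH rfl
  comp_id _ := STambHom.extH rfl
  assoc _ _ _ := STambHom.extH rfl

/-- The forgetful functor `Tamb(G) → Mack(G)` (neglect of norms). -/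
def forgetTM (G : Type) [Group G] : Tambara G ⥤ Mackey G where
  obj T := ⟨T.toSemiMackey, T.hasNeg⟩
  map f := f.toSMackHom
  map_id _ := rfl
  map_comp _ _ := rfl

end CoreCat


/-!
The free Tambara functor on `M` is realised as a term model: terms built from elements of `M` by
restriction, transfer, norm, pairing and negation, modulo the congruence generated by the Tambara
axioms and the structure of `M`. Evaluating terms in a Tambara functor `S` is the counit, so the
structure map of the algebra attached to `S` sends `n_f θ(x)` to `n_f x`. Conversely a
`T`-algebra `m : T(R) → R` yields norms `n_f x := m (n_f θ(x))`: the unit law gives `n_id = id`,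
and the associativity law evaluated at `n_f θ(t)` reads `m (n_f t) = m (n_f θ(m t))`, which gives
the remaining Tambara axioms and shows that `m` is evaluation of terms. The two constructions are
mutually inverse on objects, and algebra maps are exactly the maps commuting with these norms.

Maps of Tambara functors commute with evaluation of `neg` only because negatives are unique: the
transfer-induced addition of a Mackey functor is commutative and associative, which is where the
Mackey axiom, transported between isomorphic pullbacks, is used.
-/

section PullbackTransport

variable {X Y Z : Type} [MulAction G X] [MulAction G Y] [MulAction G Z]

/-- `Pb j i` as a sub-`G`-set of `X × Y`: pullbacks with the same defining predicate are then
equal, which is how the Mackey axiom is transported from one pullback to another. -/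
def pbSub (j : X →[G] Z) (i : Y →[G] Z) : SubMulAction G (X × Y) where
  carrier := {p | j p.1 = i p.2}
  smul_mem' a p (hp : j p.1 = i p.2) := show j (a • p.1) = i (a • p.2) by
    rw [map_smul, map_smul, hp]

def subFst (S : SubMulAction G (X × Y)) : S →[G] X := ⟨fun p => p.1.1, fun _ _ => rfl⟩

def subSnd (S : SubMulAction G (X × Y)) : S →[G] Y := ⟨fun p => p.1.2, fun _ _ => rfl⟩

end PullbackTransport

section MackeyCalculus

variable (M : SemiMackey G)

theorem SemiMackey.tr_res_pb_eq_of_iff {X Y : FinGSet G} {Z Z' : Type} [MulAction G Z]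
    [MulAction G Z'] (j : X.carrier →[G] Z) (i : Y.carrier →[G] Z) (j' : X.carrier →[G] Z')
    (i' : Y.carrier →[G] Z') (h : ∀ x y, j x = i y ↔ j' x = i' y) (y : M.obj Y) :
    M.tr (X := mkG G (Pb j i)) (Pb.fstHom j i) (M.res (Pb.sndHom j i) y) =
      M.tr (X := mkG G (Pb j' i')) (Pb.fstHom j' i') (M.res (Pb.sndHom j' i') y) := by
  have key : ∀ S S' : SubMulAction G (X.carrier × Y.carrier), S = S' →
      M.tr (X := mkG G S) (subFst S) (M.res (subSnd S) y) =
        M.tr (X := mkG G S') (subFst S') (M.res (subSnd S') y) := by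
    rintro S _ rfl; rfl
  exact key (pbSub j i) (pbSub j' i') (SubMulAction.ext fun p => h p.1 p.2)

/-- For injective `w` the pullback of `w` along itself is that of the identity. -/
theorem SemiMackey.res_tr_of_injective {A B : FinGSet G} (w : A.carrier →[G] B.carrier)
    (hw : Function.Injective w) (y : M.obj A) : M.res w (M.tr w y) = y := by
  rw [M.mackey, M.tr_res_pb_eq_of_iff w w (gid G A.carrier) (gid G A.carrier)
    (fun _ _ => hw.eq_iff), ← M.mackey, M.tr_id, M.res_id]

theorem SemiMackey.res_injective_of_rightInverse {A B : FinGSet G} (u : A.carrier →[G] B.carrier)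
    (v : B.carrier →[G] A.carrier) (huv : Function.RightInverse v u) :
    Function.Injective (M.res u) := by
  intro z z' h
  have h' := congrArg (M.res v) h
  rwa [M.res_comp, M.res_comp, (MulActionHom.ext huv : gcomp u v = gid G B.carrier), M.res_id,
    M.res_id] at h'

theorem SemiMackey.tr_eq_res_of_inverse {A B : FinGSet G} (u : A.carrier →[G] B.carrier)
    (v : B.carrier →[G] A.carrier) (hvu : Function.LeftInverse v u)
    (huv : Function.RightInverse v u) (y : M.obj A) : M.tr u y = M.res v y := by
  apply M.res_injective_of_rightInverse u v huv
  rw [M.res_tr_of_injective u hvu.injective, M.res_comp,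
    (MulActionHom.ext hvu : gcomp v u = gid G A.carrier), M.res_id]

theorem SemiMackey.tr_res_of_inverse {A B : FinGSet G} (u : A.carrier →[G] B.carrier)
    (v : B.carrier →[G] A.carrier) (hvu : Function.LeftInverse v u)
    (huv : Function.RightInverse v u) (z : M.obj B) : M.tr u (M.res u z) = z := by
  rw [M.tr_eq_res_of_inverse u v hvu huv, M.res_comp,
    (MulActionHom.ext huv : gcomp u v = gid G B.carrier), M.res_id]

theorem SemiMackey.res_tr_eq_of_bijective {X Y Z E : FinGSet G} (j : X.carrier →[G] Z.carrier)
    (i : Y.carrier →[G] Z.carrier) (c : E.carrier →[G] Pb j i) (hc : Function.Bijective c)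
    (y : M.obj Y) :
    M.res j (M.tr i y) = M.tr (gcomp (Pb.fstHom j i) c) (M.res (gcomp (Pb.sndHom j i) c) y) := by
  obtain ⟨v, hvc, hcv⟩ := Function.bijective_iff_has_inverse.mp hc
  let P := mkG G (Pb j i)
  calc M.res j (M.tr i y)
      = M.tr (X := P) (Pb.fstHom j i) (M.tr (Y := P) c (M.res (X := E) (Y := P) c
          (M.res (X := P) (Pb.sndHom j i) y))) := by
        rw [M.mackey, M.tr_res_of_inverse (B := P) c (c.inverse v hvc hcv) hvc hcv]
    _ = _ := (M.tr_comp (X := E) (Y := P) _ _ _).trans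
        (congrArg _ (M.res_comp (X := E) (Y := P) _ _ y))

theorem SemiMackey.tr_of_isEmpty {E X : FinGSet G} (hE : IsEmpty E.carrier)
    (f : E.carrier →[G] X.carrier) (x : M.obj E) : M.tr f x = M.zero X := by
  let toEmpty : E.carrier →[G] (emptyG G).carrier := ⟨hE.elim, fun _ e => hE.elim e⟩
  rw [(MulActionHom.ext fun e => hE.elim e : f = gcomp (initHom X) toEmpty), ← M.tr_comp]
  exact congrArg (M.tr (initHom X)) (M.empty_subsingleton.elim _ _)

theorem SemiMackey.res_inl_pairElt_s11 {X Y : FinGSet G} (x : M.obj X) (y : M.obj Y) :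
    M.res (inlHom X Y) (M.pairElt x y) = x :=
  congrArg Prod.fst ((Equiv.ofBijective _ (M.sum_bij X Y)).apply_symm_apply (x, y))

theorem SemiMackey.res_inr_pairElt_s11 {X Y : FinGSet G} (x : M.obj X) (y : M.obj Y) :
    M.res (inrHom X Y) (M.pairElt x y) = y :=
  congrArg Prod.snd ((Equiv.ofBijective _ (M.sum_bij X Y)).apply_symm_apply (x, y))

theorem SemiMackey.eq_pairElt {X Y : FinGSet G} {z : M.obj (sumG X Y)} {x : M.obj X}
    {y : M.obj Y} (hx : M.res (inlHom X Y) z = x) (hy : M.res (inrHom X Y) z = y) :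
    z = M.pairElt x y :=
  (M.sum_bij X Y).injective <| Prod.ext (hx.trans (M.res_inl_pairElt_s11 x y).symm)
    (hy.trans (M.res_inr_pairElt_s11 x y).symm)

theorem SemiMackey.res_sumElim {X Y Z : FinGSet G} (a : X.carrier →[G] Z.carrier)
    (b : Y.carrier →[G] Z.carrier) (z : M.obj Z) :
    M.res (sumElimHom a b) z = M.pairElt (M.res a z) (M.res b z) :=
  M.eq_pairElt (by rw [M.res_comp]; rfl) (by rw [M.res_comp]; rfl)

theorem SemiMackey.res_inl_tr_sumMap {X Y X' Y' : FinGSet G} (f : X.carrier →[G] X'.carrier)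
    (g : Y.carrier →[G] Y'.carrier) (z : M.obj (sumG X Y)) :
    M.res (inlHom X' Y') (M.tr (sumMapHom f g) z) = M.tr f (M.res (inlHom X Y) z) := by
  let c : X.carrier →[G] Pb (inlHom X' Y') (sumMapHom f g) :=
    ⟨fun x => ⟨(f x, Sum.inl x), rfl⟩, fun a x => Subtype.ext <| by
      simp only [map_smul]; rfl⟩
  refine M.res_tr_eq_of_bijective _ _ c ⟨fun x x' h => ?_, ?_⟩ z
  · exact Sum.inl_injective (congrArg (fun q => q.1.2) h)
  · rintro ⟨⟨x', x | y⟩, hq⟩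
    · exact ⟨x, Subtype.ext (Prod.ext (Sum.inl_injective hq).symm rfl)⟩
    · exact (Sum.inl_ne_inr hq).elim

theorem SemiMackey.res_inr_tr_sumMap {X Y X' Y' : FinGSet G} (f : X.carrier →[G] X'.carrier)
    (g : Y.carrier →[G] Y'.carrier) (z : M.obj (sumG X Y)) :
    M.res (inrHom X' Y') (M.tr (sumMapHom f g) z) = M.tr g (M.res (inrHom X Y) z) := by
  let c : Y.carrier →[G] Pb (inrHom X' Y') (sumMapHom f g) :=
    ⟨fun y => ⟨(g y, Sum.inr y), rfl⟩, fun a y => Subtype.ext <| by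
      simp only [map_smul]; rfl⟩
  refine M.res_tr_eq_of_bijective _ _ c ⟨fun y y' h => ?_, ?_⟩ z
  · exact Sum.inr_injective (congrArg (fun q => q.1.2) h)
  · rintro ⟨⟨y', x | y⟩, hq⟩
    · exact (Sum.inr_ne_inl hq).elim
    · exact ⟨y, Subtype.ext (Prod.ext (Sum.inr_injective hq).symm rfl)⟩

theorem SemiMackey.tr_sumMap_pairElt_s11 {X Y X' Y' : FinGSet G} (f : X.carrier →[G] X'.carrier)
    (g : Y.carrier →[G] Y'.carrier) (a : M.obj X) (b : M.obj Y) :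
    M.tr (sumMapHom f g) (M.pairElt a b) = M.pairElt (M.tr f a) (M.tr g b) :=
  M.eq_pairElt (by rw [res_inl_tr_sumMap, res_inl_pairElt_s11])
    (by rw [res_inr_tr_sumMap, res_inr_pairElt_s11])

theorem SemiMackey.tr_sumElim_pairElt_s11 {X Y Z : FinGSet G} (f : X.carrier →[G] Z.carrier)
    (g : Y.carrier →[G] Z.carrier) (a : M.obj X) (b : M.obj Y) :
    M.tr (sumElimHom f g) (M.pairElt a b) = M.add (M.tr f a) (M.tr g b) := by
  rw [(MulActionHom.ext (by rintro (x | y) <;> rfl) :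
    sumElimHom f g = gcomp (foldHom Z) (sumMapHom f g)), ← M.tr_comp, tr_sumMap_pairElt_s11]
  rfl

theorem SemiMackey.pairElt_zero_left {X Y : FinGSet G} (y : M.obj Y) :
    M.pairElt (M.zero X) y = M.tr (inrHom X Y) y := by
  refine (M.eq_pairElt ?_ (M.res_tr_of_injective _ Sum.inr_injective y)).symm
  rw [M.mackey]
  exact M.tr_of_isEmpty (E := mkG G (Pb (inlHom X Y) (inrHom X Y)))
    ⟨fun q => Sum.inl_ne_inr q.2⟩ _ _

end MackeyCalculus

section AdditiveMonoid

variable (M : SemiMackey G) {X : FinGSet G}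

theorem SemiMackey.zero_add (x : M.obj X) : M.add (M.zero X) x = x := by
  rw [SemiMackey.add, pairElt_zero_left, M.tr_comp,
    (MulActionHom.ext fun _ => rfl : gcomp (foldHom X) (inrHom X X) = gid G X.carrier), M.tr_id]

theorem SemiMackey.add_comm (x y : M.obj X) : M.add x y = M.add y x := by
  let swap := sumElimHom (inrHom X X) (inlHom X X)
  have hswap : Function.LeftInverse swap swap := by rintro (a | a) <;> rfl
  have h : M.pairElt y x = M.tr swap (M.pairElt x y) := by
    rw [M.tr_eq_res_of_inverse swap swap hswap hswap, res_sumElim, res_inr_pairElt_s11,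
      res_inl_pairElt_s11]
  rw [SemiMackey.add, SemiMackey.add, h, M.tr_comp,
    (MulActionHom.ext (by rintro (a | a) <;> rfl) : gcomp (foldHom X) swap = foldHom X)]

theorem SemiMackey.add_zero_s11 (x : M.obj X) : M.add x (M.zero X) = x := by
  rw [M.add_comm, M.zero_add]

theorem SemiMackey.add_assoc_s11 (x y z : M.obj X) : M.add (M.add x y) z = M.add x (M.add y z) := by
  let XX := sumG X X
  let assoc : (sumG XX X).carrier →[G] (sumG X XX).carrier :=
    sumElimHom (sumElimHom (inlHom X XX) (gcomp (inrHom X XX) (inlHom X X)))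
      (gcomp (inrHom X XX) (inrHom X X))
  let unassoc : (sumG X XX).carrier →[G] (sumG XX X).carrier :=
    sumElimHom (gcomp (inlHom XX X) (inlHom X X))
      (sumElimHom (gcomp (inlHom XX X) (inrHom X X)) (inrHom XX X))
  have hreassoc : M.tr assoc (M.pairElt (M.pairElt x y) z) = M.pairElt x (M.pairElt y z) := by
    rw [M.tr_eq_res_of_inverse assoc unassoc (by rintro ((a | a) | a) <;> rfl)
      (by rintro (a | a | a) <;> rfl)]
    simp only [unassoc, res_sumElim, ← M.res_comp, res_inl_pairElt_s11, res_inr_pairElt_s11]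
  have hleft : M.add (M.add x y) z = M.tr (sumElimHom (foldHom X) (gid G X.carrier))
      (M.pairElt (M.pairElt x y) z) := by
    rw [tr_sumElim_pairElt_s11, M.tr_id]; rfl
  have hright : M.add x (M.add y z) = M.tr (sumElimHom (gid G X.carrier) (foldHom X))
      (M.pairElt x (M.pairElt y z)) := by
    rw [tr_sumElim_pairElt_s11, M.tr_id]; rfl
  rw [hleft, hright, ← hreassoc, M.tr_comp]
  congr 1
  ext ((a | a) | a) <;> rfl

theorem SemiMackey.eq_of_add_eq_zero {x y y' : M.obj X} (h : M.add x y = M.zero X)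
    (h' : M.add x y' = M.zero X) : y = y' :=
  calc y = M.add y (M.add x y') := by rw [h', M.add_zero_s11]
    _ = M.add (M.add x y) y' := by rw [← M.add_assoc_s11, M.add_comm y x]
    _ = y' := by rw [h, M.zero_add]

end AdditiveMonoid

section Homs

theorem SMackHom.app_pairElt {M N : SemiMackey G} (φ : SMackHom M N) {X Y : FinGSet G}
    (x : M.obj X) (y : M.obj Y) :
    φ.app (sumG X Y) (M.pairElt x y) = N.pairElt (φ.app X x) (φ.app Y y) :=
  N.eq_pairElt (by rw [← φ.app_res, M.res_inl_pairElt_s11])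
    (by rw [← φ.app_res, M.res_inr_pairElt_s11])

theorem SMackHom.app_zero {M N : SemiMackey G} (φ : SMackHom M N) (X : FinGSet G) :
    φ.app X (M.zero X) = N.zero X := by
  rw [SemiMackey.zero, φ.app_tr]
  exact congrArg (N.tr (initHom X)) (N.empty_subsingleton.elim _ _)

theorem SMackHom.app_add {M N : SemiMackey G} (φ : SMackHom M N) {X : FinGSet G}
    (x y : M.obj X) : φ.app X (M.add x y) = N.add (φ.app X x) (φ.app X y) := by
  rw [SemiMackey.add, φ.app_tr, φ.app_pairElt]
  rfl

end Homs

section Negation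

variable (S : Tambara G) {X : FinGSet G}

noncomputable def Tambara.neg (x : S.obj X) : S.obj X := Classical.choose (S.hasNeg X x)

theorem Tambara.add_neg (x : S.obj X) : S.add x (S.neg x) = S.zero X :=
  Classical.choose_spec (S.hasNeg X x)

theorem Tambara.eq_neg_of_add_eq_zero {x y : S.obj X} (h : S.add x y = S.zero X) :
    y = S.neg x :=
  S.eq_of_add_eq_zero h (S.add_neg x)

end Negation

theorem STambHom.app_neg {S S' : Tambara G} {X : FinGSet G}
    (h : STambHom S.toSemiTambara S'.toSemiTambara)
    (x : S.obj X) : h.app X (S.neg x) = S'.neg (h.app X x) :=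
  S'.eq_neg_of_add_eq_zero (by rw [← h.app_add, S.add_neg, h.app_zero])

section TermModel

/-- `pair` realises the inverse of `M(X ⊔ Y) → M(X) × M(Y)` and `neg` the additive inverse. -/
inductive Term (M : SemiMackey G) : FinGSet G → Type 1 where
  | of {X : FinGSet G} (x : M.obj X) : Term M X
  | res {X Y : FinGSet G} (f : X.carrier →[G] Y.carrier) (t : Term M Y) : Term M X
  | tr {X Y : FinGSet G} (f : X.carrier →[G] Y.carrier) (t : Term M X) : Term M Y
  | nm {X Y : FinGSet G} (f : X.carrier →[G] Y.carrier) (t : Term M X) : Term M Y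
  | pair {X Y : FinGSet G} (s : Term M X) (t : Term M Y) : Term M (sumG X Y)
  | neg {X : FinGSet G} (t : Term M X) : Term M X

/-- No reflexivity, symmetry or transitivity rules are needed: `Quot` takes the equivalence
closure. -/
inductive Term.Rel (M : SemiMackey G) : ∀ X : FinGSet G, Term M X → Term M X → Prop where
  | res_congr {X Y : FinGSet G} (f : X.carrier →[G] Y.carrier) {s t : Term M Y} :
      Term.Rel M Y s t → Term.Rel M X (.res f s) (.res f t)
  | tr_congr {X Y : FinGSet G} (f : X.carrier →[G] Y.carrier) {s t : Term M X} :
      Term.Rel M X s t → Term.Rel M Y (.tr f s) (.tr f t)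
  | nm_congr {X Y : FinGSet G} (f : X.carrier →[G] Y.carrier) {s t : Term M X} :
      Term.Rel M X s t → Term.Rel M Y (.nm f s) (.nm f t)
  | pair_congr_left {X Y : FinGSet G} {s s' : Term M X} (t : Term M Y) :
      Term.Rel M X s s' → Term.Rel M (sumG X Y) (.pair s t) (.pair s' t)
  | pair_congr_right {X Y : FinGSet G} (s : Term M X) {t t' : Term M Y} :
      Term.Rel M Y t t' → Term.Rel M (sumG X Y) (.pair s t) (.pair s t')
  | neg_congr {X : FinGSet G} {s t : Term M X} :
      Term.Rel M X s t → Term.Rel M X (.neg s) (.neg t)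
  | of_res {X Y : FinGSet G} (f : X.carrier →[G] Y.carrier) (y : M.obj Y) :
      Term.Rel M X (.of (M.res f y)) (.res f (.of y))
  | of_tr {X Y : FinGSet G} (f : X.carrier →[G] Y.carrier) (x : M.obj X) :
      Term.Rel M Y (.of (M.tr f x)) (.tr f (.of x))
  | res_id {X : FinGSet G} (t : Term M X) : Term.Rel M X (.res (gid G X.carrier) t) t
  | res_comp {X Y Z : FinGSet G} (i : X.carrier →[G] Y.carrier) (j : Y.carrier →[G] Z.carrier)
      (t : Term M Z) : Term.Rel M X (.res i (.res j t)) (.res (gcomp j i) t)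
  | tr_id {X : FinGSet G} (t : Term M X) : Term.Rel M X (.tr (gid G X.carrier) t) t
  | tr_comp {X Y Z : FinGSet G} (i : X.carrier →[G] Y.carrier) (j : Y.carrier →[G] Z.carrier)
      (t : Term M X) : Term.Rel M Z (.tr j (.tr i t)) (.tr (gcomp j i) t)
  | nm_id {X : FinGSet G} (t : Term M X) : Term.Rel M X (.nm (gid G X.carrier) t) t
  | nm_comp {X Y Z : FinGSet G} (i : X.carrier →[G] Y.carrier) (j : Y.carrier →[G] Z.carrier)
      (t : Term M X) : Term.Rel M Z (.nm j (.nm i t)) (.nm (gcomp j i) t)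
  | mackey {X Y Z : FinGSet G} (j : X.carrier →[G] Z.carrier) (i : Y.carrier →[G] Z.carrier)
      (t : Term M Y) :
      Term.Rel M X (.res j (.tr i t))
        (.tr (Pb.fstHom j i) (.res (X := mkG G (Pb j i)) (Pb.sndHom j i) t))
  | nm_res {X Y Z : FinGSet G} (j : X.carrier →[G] Z.carrier) (i : Y.carrier →[G] Z.carrier)
      (t : Term M Y) :
      Term.Rel M X (.res j (.nm i t))
        (.nm (Pb.fstHom j i) (.res (X := mkG G (Pb j i)) (Pb.sndHom j i) t))
  | distrib {X Y Z A B : FinGSet G} (i : X.carrier →[G] Y.carrier)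
      (j : Y.carrier →[G] Z.carrier) (f : A.carrier →[G] X.carrier)
      (g : A.carrier →[G] B.carrier) (h : B.carrier →[G] Z.carrier) :
      IsDistributor i j f g h → ∀ t : Term M X,
      Term.Rel M Z (.nm j (.tr i t)) (.tr h (.nm g (.res f t)))
  | pair_inl {X Y : FinGSet G} (s : Term M X) (t : Term M Y) :
      Term.Rel M X (.res (inlHom X Y) (.pair s t)) s
  | pair_inr {X Y : FinGSet G} (s : Term M X) (t : Term M Y) :
      Term.Rel M Y (.res (inrHom X Y) (.pair s t)) t
  | pair_eta {X Y : FinGSet G} (z : Term M (sumG X Y)) :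
      Term.Rel M (sumG X Y) (.pair (.res (inlHom X Y) z) (.res (inrHom X Y) z)) z
  | add_neg {X : FinGSet G} (t : Term M X) (e : Term M (emptyG G)) :
      Term.Rel M X (.tr (foldHom X) (.pair t (.neg t))) (.tr (initHom X) e)
  | empty_all (s t : Term M (emptyG G)) : Term.Rel M (emptyG G) s t

variable (M : SemiMackey G)

def FreeVal (X : FinGSet G) : Type 1 := Quot (Term.Rel M X)

def FreeVal.mk {X : FinGSet G} (t : Term M X) : FreeVal M X := Quot.mk _ t

def FreeVal.pair {X Y : FinGSet G} : FreeVal M X → FreeVal M Y → FreeVal M (sumG X Y) :=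
  Quot.map₂ Term.pair (fun s _ _ => .pair_congr_right s) (fun _ _ t => .pair_congr_left t)

def freeSemi : SemiTambara G where
  obj := FreeVal M
  nonempty X := ⟨FreeVal.mk M (.of (M.nonempty X).some)⟩
  res f := Quot.map (Term.res f) fun _ _ => .res_congr f
  tr f := Quot.map (Term.tr f) fun _ _ => .tr_congr f
  nm f := Quot.map (Term.nm f) fun _ _ => .nm_congr f
  res_id := Quot.ind fun t => Quot.sound (.res_id t)
  res_comp i j := Quot.ind fun t => Quot.sound (.res_comp i j t)
  tr_id := Quot.ind fun t => Quot.sound (.tr_id t)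
  tr_comp i j := Quot.ind fun t => Quot.sound (.tr_comp i j t)
  nm_id := Quot.ind fun t => Quot.sound (.nm_id t)
  nm_comp i j := Quot.ind fun t => Quot.sound (.nm_comp i j t)
  mackey j i := Quot.ind fun t => Quot.sound (.mackey j i t)
  nm_res j i := Quot.ind fun t => Quot.sound (.nm_res j i t)
  distrib i j f g h hd := Quot.ind fun t => Quot.sound (.distrib i j f g h hd t)
  sum_bij _ _ := Function.bijective_iff_has_inverse.mpr
    ⟨fun p => FreeVal.pair M p.1 p.2, Quot.ind fun z => Quot.sound (.pair_eta z),
      fun ⟨a, b⟩ => Quot.induction_on₂ a b fun s t =>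
        Prod.ext (Quot.sound (.pair_inl s t)) (Quot.sound (.pair_inr s t))⟩
  empty_subsingleton := ⟨Quot.ind fun s => Quot.ind fun t => Quot.sound (.empty_all s t)⟩

theorem freeSemi_pairElt {X Y : FinGSet G} (s : Term M X) (t : Term M Y) :
    (freeSemi M).pairElt (FreeVal.mk M s) (FreeVal.mk M t) = FreeVal.mk M (.pair s t) :=
  ((freeSemi M).eq_pairElt (z := FreeVal.mk M (.pair s t)) (Quot.sound (Term.Rel.pair_inl s t))
    (Quot.sound (Term.Rel.pair_inr s t))).symm

theorem freeSemi_add_neg {X : FinGSet G} (t : Term M X) :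
    (freeSemi M).add (FreeVal.mk M t) (FreeVal.mk M (.neg t)) = (freeSemi M).zero X := by
  refine (congrArg ((freeSemi M).tr (foldHom X)) (freeSemi_pairElt M t (.neg t))).trans ?_
  let e : Term M (emptyG G) := .of (M.nonempty _).some
  exact (Quot.sound (Term.Rel.add_neg t e)).trans (congrArg ((freeSemi M).tr (initHom X))
    ((freeSemi M).empty_subsingleton.elim (FreeVal.mk M e) ((freeSemi M).nonempty _).some))

def freeTamb (N : Mackey G) : Tambara G :=
  ⟨freeSemi N.toSemiMackey, fun _ => Quot.ind fun t => ⟨_, freeSemi_add_neg _ t⟩⟩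

end TermModel

section Evaluation

variable {M : SemiMackey G} (S : Tambara G) (φ : SMackHom M S.toSemiMackey)

noncomputable def evTerm : ∀ {X : FinGSet G}, Term M X → S.obj X
  | _, .of x => φ.app _ x
  | _, .res f t => S.res f (evTerm t)
  | _, .tr f t => S.tr f (evTerm t)
  | _, .nm f t => S.nm f (evTerm t)
  | _, .pair s t => S.pairElt (evTerm s) (evTerm t)
  | _, .neg t => S.neg (evTerm t)

theorem evTerm_eq_of_rel {X : FinGSet G} {s t : Term M X} (h : Term.Rel M X s t) :
    evTerm S φ s = evTerm S φ t := by
  induction h with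
  | res_congr f _ ih => exact congrArg (S.res f) ih
  | tr_congr f _ ih => exact congrArg (S.tr f) ih
  | nm_congr f _ ih => exact congrArg (S.nm f) ih
  | pair_congr_left t _ ih => exact congrArg (S.pairElt · (evTerm S φ t)) ih
  | pair_congr_right s _ ih => exact congrArg (S.pairElt (evTerm S φ s)) ih
  | neg_congr _ ih => exact congrArg S.neg ih
  | of_res f y => exact φ.app_res f y
  | of_tr f x => exact φ.app_tr f x
  | res_id t => exact S.res_id _
  | res_comp i j t => exact S.res_comp i j _
  | tr_id t => exact S.tr_id _
  | tr_comp i j t => exact S.tr_comp i j _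
  | nm_id t => exact S.nm_id _
  | nm_comp i j t => exact S.nm_comp i j _
  | mackey j i t => exact S.mackey j i _
  | nm_res j i t => exact S.nm_res j i _
  | distrib i j f g h hd t => exact S.distrib i j f g h hd _
  | pair_inl s t => exact S.res_inl_pairElt_s11 _ _
  | pair_inr s t => exact S.res_inr_pairElt_s11 _ _
  | pair_eta z => exact (S.eq_pairElt rfl rfl).symm
  | add_neg t e =>
      exact (S.add_neg _).trans (congrArg (S.tr (initHom _)) (S.empty_subsingleton.elim _ _))
  | empty_all s t => exact S.empty_subsingleton.elim _ _

noncomputable def evHom : STambHom (freeSemi M) S.toSemiTambara :=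
  ⟨⟨fun _ => Quot.lift (evTerm S φ) fun _ _ => evTerm_eq_of_rel S φ,
    fun _ => Quot.ind fun _ => rfl, fun _ => Quot.ind fun _ => rfl⟩,
    fun _ => Quot.ind fun _ => rfl⟩

end Evaluation

section Adjunction

open CategoryTheory

def theta (M : Mackey G) : SMackHom M.toSemiMackey (freeTamb M).toSemiMackey :=
  ⟨fun _ x => FreeVal.mk _ (.of x), fun f y => Quot.sound (.of_res f y),
    fun f x => Quot.sound (.of_tr f x)⟩

theorem freeTamb_mk_neg {M : Mackey G} {X : FinGSet G} (t : Term M.toSemiMackey X) :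
    FreeVal.mk _ (.neg t) = (freeTamb M).neg (FreeVal.mk _ t) :=
  (freeTamb M).eq_neg_of_add_eq_zero (freeSemi_add_neg _ t)

theorem STambHom.app_mk {M : Mackey G} {S : Tambara G}
    (h : STambHom (freeTamb M).toSemiTambara S.toSemiTambara) {X : FinGSet G}
    (t : Term M.toSemiMackey X) :
    h.app X (FreeVal.mk _ t) = evTerm S ((theta M).compH h.toSMackHom) t := by
  induction t with
  | of x => rfl
  | res f t ih => exact (h.app_res f _).trans (congrArg (S.res f) ih)
  | tr f t ih => exact (h.app_tr f _).trans (congrArg (S.tr f) ih)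
  | nm f t ih => exact (h.app_nm f _).trans (congrArg (S.nm f) ih)
  | pair s t ihs iht =>
      exact (congrArg (h.app _) (freeSemi_pairElt _ s t).symm).trans
        ((h.app_pairElt _ _).trans (congrArg₂ S.pairElt ihs iht))
  | neg t ih =>
      exact (congrArg (h.app _) (freeTamb_mk_neg t)).trans
        ((h.app_neg _).trans (congrArg S.neg ih))

noncomputable def freeHomEquiv (M : Mackey G) (S : Tambara G) :
    (freeTamb M ⟶ S) ≃ (M ⟶ (forgetTM G).obj S) where
  toFun h := (theta M).compH h.toSMackHom
  invFun φ := evHom S φ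
  left_inv h := STambHom.extH <| funext fun _ => funext <| Quot.ind fun t => (h.app_mk t).symm
  right_inv _ := rfl

noncomputable def freeFunctor (G : Type) [Group G] : Mackey G ⥤ Tambara G :=
  Adjunction.leftAdjointOfEquiv freeHomEquiv fun _ _ _ _ _ => rfl

noncomputable def freeAdj (G : Type) [Group G] : freeFunctor G ⊣ forgetTM G :=
  Adjunction.adjunctionOfEquivLeft _ _

end Adjunction

section Comparison

open CategoryTheory

instance : (forgetTM G).Faithful where
  map_injective h := STambHom.extH (congrArg SMackHom.app h)

variable (A : (freeAdj G).toMonad.Algebra)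

theorem algebra_a_mk_of {X : FinGSet G} (x : A.A.obj X) :
    A.a.app X (FreeVal.mk _ (.of x)) = x :=
  congrArg (fun ψ => SMackHom.app ψ X x) A.unit

theorem algebra_a_mk_nm {X Y : FinGSet G} (f : X.carrier →[G] Y.carrier)
    (t : Term A.A.toSemiMackey X) :
    A.a.app Y (FreeVal.mk _ (.nm f t)) =
      A.a.app Y (FreeVal.mk _ (.nm f (.of (A.a.app X (FreeVal.mk _ t))))) :=
  congrFun (congrArg (fun ψ => SMackHom.app ψ Y) A.assoc)
    (FreeVal.mk (freeTamb A.A).toSemiMackey (.nm f (.of (FreeVal.mk _ t))))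

def tambaraOfAlgebra : Tambara G where
  toSemiMackey := A.A.toSemiMackey
  nm f x := A.a.app _ (FreeVal.mk _ (.nm f (.of x)))
  nm_id x := (congrArg (A.a.app _) (Quot.sound (.nm_id (.of x)))).trans (algebra_a_mk_of A x)
  nm_comp i j x := (algebra_a_mk_nm A j (.nm i (.of x))).symm.trans
    (congrArg (A.a.app _) (Quot.sound (.nm_comp i j _)))
  nm_res j i y := (A.a.app_res j _).symm.trans <| congrArg (A.a.app _) <|
    (Quot.sound (.nm_res j i (.of y))).trans
      (congrArg ((freeSemi _).nm _) (Quot.sound (.of_res _ y)).symm)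
  distrib i j f g h hd x := .trans (congrArg (A.a.app _) <|
      (congrArg ((freeSemi _).nm j) (Quot.sound (.of_tr i x))).trans <|
      (Quot.sound (.distrib i j f g h hd (.of x))).trans <|
      congrArg ((freeSemi _).tr h ∘ (freeSemi _).nm g) (Quot.sound (.of_res f x)).symm)
    (A.a.app_tr h _)
  hasNeg := A.A.hasNeg

theorem evTerm_tambaraOfAlgebra {X : FinGSet G} (t : Term A.A.toSemiMackey X) :
    evTerm (tambaraOfAlgebra A) (SMackHom.idH _) t = A.a.app X (FreeVal.mk _ t) := by
  induction t with
  | of x => exact (algebra_a_mk_of A x).symm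
  | res f t ih => exact (congrArg (A.A.res f) ih).trans (A.a.app_res f _).symm
  | tr f t ih => exact (congrArg (A.A.tr f) ih).trans (A.a.app_tr f _).symm
  | nm f t ih =>
      exact (congrArg (fun x => A.a.app _ (FreeVal.mk _ (.nm f (.of x)))) ih).trans
        (algebra_a_mk_nm A f t).symm
  | pair s t ihs iht =>
      exact (congrArg₂ A.A.pairElt ihs iht).trans <| (A.a.app_pairElt _ _).symm.trans
        (congrArg (A.a.app _) (freeSemi_pairElt _ s t))
  | neg t ih =>
      refine ((tambaraOfAlgebra A).eq_neg_of_add_eq_zero ?_).symm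
      rw [ih]
      exact (A.a.app_add _ _).symm.trans
        ((congrArg (A.a.app _) (freeSemi_add_neg _ t)).trans (A.a.app_zero _))

theorem comparison_obj_tambaraOfAlgebra :
    (Monad.comparison (freeAdj G)).obj (tambaraOfAlgebra A) = A := by
  have ha : (forgetTM G).map ((freeAdj G).counit.app (tambaraOfAlgebra A)) = A.a :=
    SMackHom.extH <| funext fun _ => funext <| Quot.ind (evTerm_tambaraOfAlgebra A)
  obtain ⟨N, a, _, _⟩ := A
  show Monad.Algebra.mk _ _ _ _ = _
  congr

theorem tambaraOfAlgebra_comparison_obj (S : Tambara G) :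
    tambaraOfAlgebra ((Monad.comparison (freeAdj G)).obj S) = S :=
  rfl

theorem comparison_obj_bijective : Function.Bijective (Monad.comparison (freeAdj G)).obj :=
  Function.bijective_iff_has_inverse.mpr
    ⟨tambaraOfAlgebra, tambaraOfAlgebra_comparison_obj, comparison_obj_tambaraOfAlgebra⟩

instance : (Monad.comparison (freeAdj G)).Full where
  map_surjective ψ := ⟨⟨ψ.f, fun f x =>
    (congrFun (congrArg (fun χ => SMackHom.app χ _) ψ.h) (FreeVal.mk _ (.nm f (.of x)))).symm⟩,
    rfl⟩

instance : (Monad.comparison (freeAdj G)).IsEquivalence where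
  essSurj :=
    ⟨fun A => ⟨tambaraOfAlgebra A, ⟨eqToIso (comparison_obj_tambaraOfAlgebra A)⟩⟩⟩

end Comparison

open CategoryTheory

theorem statement19_general (G : Type) [Group G] :
    ∃ (T : Mackey G ⥤ Tambara G) (adj : T ⊣ forgetTM G),
      (Monad.comparison adj).IsEquivalence ∧
      Function.Bijective (Monad.comparison adj).obj ∧
      (∀ (S : Tambara G) {X Y : FinGSet G} (f : X.carrier →[G] Y.carrier) (x : S.obj X),
        S.nm f x =
          SMackHom.app ((forgetTM G).map (adj.counit.app S)) Y
            ((T.obj ((forgetTM G).obj S)).nm f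
              (SMackHom.app (adj.unit.app ((forgetTM G).obj S)) X x))) :=
  ⟨freeFunctor G, freeAdj G, inferInstance, comparison_obj_bijective, fun _ _ _ _ _ => rfl⟩

/-- **Statement 19.** The forgetful functor `Tamb(G) → Mack(G)` is monadic: for the free
Tambara functor adjunction `T ⊣ forget`, the Eilenberg–Moore comparison functor
`Tamb(G) → Mack(G)[𝕋]` is an isomorphism of categories (an equivalence which is
bijective on objects).  Moreover, the norm maps of the Tambara functor corresponding to
a `𝕋`-algebra `(R, m : 𝕋(R) → R)` are given by `n_f = m(Y) ∘ n_f^{𝕋(R)} ∘ θ_R(X)` where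
`θ` is the unit of the monad; equivalently, for every Tambara functor `S`, regarded as
the algebra `(forget S, forget(ε_S))`, the norms of `S` satisfy this formula. -/
theorem statement19 (G : Type) [Group G] [Finite G] :
    ∃ (T : Mackey G ⥤ Tambara G) (adj : T ⊣ forgetTM G),
      (Monad.comparison adj).IsEquivalence ∧
      Function.Bijective (Monad.comparison adj).obj ∧
      (∀ (S : Tambara G) {X Y : FinGSet G} (f : X.carrier →[G] Y.carrier) (x : S.obj X),
        S.nm f x =
          SMackHom.app ((forgetTM G).map (adj.counit.app S)) Y
            ((T.obj ((forgetTM G).obj S)).nm f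
              (SMackHom.app (adj.unit.app ((forgetTM G).obj S)) X x))) :=
  statement19_general G

end Tamb
end
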